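/- arXiv:2604.04377 — 7 statements merged into one kernel-verified Lean document; each statement's English description precedes it below -/
import Mathlib

section
/- If u = w[i..i+|u|-1] is a right extension of a string w, i.e., u = xc where xc and xc' are both substrings of w for some character c' ≠ c, and this occurrence of u is the unique occurrence of u in w, then there exists j with 1 ≤ j ≤ i such that w[j..i+|u|-1] is a super-maximal right extension of w. -/
/-- `u` occurs in `w` starting at 1-indexed position `i`. -/
def occursAt {α : Type*} (w u : List α) (i : ℕ) : Prop :=
  1 ≤ i ∧ i + u.length ≤ w.length + 1 ∧ (w.drop (i - 1)).take u.length = u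

/-- `u` is a right extension in `w`: `u = x ++ [c]`, both `x++[c]` and `x++[c']`
occur in `w` for some `c' ≠ c`. -/
def RightExt {α : Type*} (w u : List α) : Prop :=
  ∃ (x : List α) (c c' : α), c ≠ c' ∧ u = x ++ [c] ∧
    (x ++ [c]) <:+: w ∧ (x ++ [c']) <:+: w

/-- super-maximal right extension: not a proper suffix of another right extension. -/
def SupMaxExt {α : Type*} (w u : List α) : Prop :=
  RightExt w u ∧ ∀ v, RightExt w v → u <:+ v → u = v

def SRE {α : Type*} (w : List α) : Set (List α) := {u | SupMaxExt w u}

noncomputable def chi {α : Type*} (w : List α) : ℕ := (SRE w).ncard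

/-- `w` ends with a character that occurs nowhere else. -/
def UniqueTerm {α : Type*} (w : List α) : Prop :=
  ∃ (v : List α) (d : α), w = v ++ [d] ∧ d ∉ v

/-- substring equation system -/
structure SES (α : Type*) where
  n : ℕ
  Eqs : Finset (ℕ × ℕ × ℕ)
  Ch : Finset (ℕ × α)

def SES.valid {α : Type*} (E : SES α) : Prop :=
  (∀ e ∈ E.Eqs, 1 ≤ e.1 ∧ 1 ≤ e.2.1 ∧ 1 ≤ e.2.2 ∧
      e.1 + e.2.2 ≤ E.n + 1 ∧ e.2.1 + e.2.2 ≤ E.n + 1) ∧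
  (∀ kc ∈ E.Ch, 1 ≤ kc.1 ∧ kc.1 ≤ E.n)

def SES.sat {α : Type*} (E : SES α) (w : List α) : Prop :=
  w.length = E.n ∧
  (∀ e ∈ E.Eqs, (w.drop (e.1 - 1)).take e.2.2 = (w.drop (e.2.1 - 1)).take e.2.2) ∧
  (∀ kc ∈ E.Ch, w[kc.1 - 1]? = some kc.2)

def SES.represents {α : Type*} (E : SES α) (w : List α) : Prop :=
  E.sat w ∧ ∀ w' : List α, E.sat w' → w' = w

def SES.size {α : Type*} (E : SES α) : ℕ := E.Eqs.card + E.Ch.card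

/-- minimum size of a valid SES representing `w` -/
noncomputable def sVal {α : Type*} (w : List α) : ℕ :=
  sInf {k | ∃ E : SES α, E.valid ∧ E.represents w ∧ E.size = k}

/-- bidirectional macro scheme machinery -/
def phraseLen {α : Type*} : α ⊕ (ℕ × ℕ) → ℕ
  | Sum.inl _ => 1
  | Sum.inr (_, ℓ) => ℓ

def startPos {α : Type*} (ph : List (α ⊕ (ℕ × ℕ))) (t : ℕ) : ℕ :=
  1 + ((ph.take t).map phraseLen).sum

/-- the phrase list `ph` is a (content-correct) macro scheme for `w` -/
def BMSFor {α : Type*} (w : List α) (ph : List (α ⊕ (ℕ × ℕ))) : Prop :=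
  (ph.map phraseLen).sum = w.length ∧
  ∀ t (h : t < ph.length),
    match ph.get ⟨t, h⟩ with
    | Sum.inl c => w[startPos ph t - 1]? = some c
    | Sum.inr (p, ℓ) => 1 ≤ ℓ ∧ 1 ≤ p ∧ p + ℓ ≤ w.length + 1 ∧
        (w.drop (startPos ph t - 1)).take ℓ = (w.drop (p - 1)).take ℓ

/-- the transition function τ (on 0-based offsets) -/
def tauAux {α : Type*} : List (α ⊕ (ℕ × ℕ)) → ℕ → Option ℕ
  | [], _ => none
  | (Sum.inl _) :: rest, i => if i = 0 then none else tauAux rest (i - 1)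
  | (Sum.inr (p, ℓ)) :: rest, i => if i < ℓ then some (p + i) else tauAux rest (i - ℓ)

/-- τ on 1-indexed positions -/
def tauStep {α : Type*} (ph : List (α ⊕ (ℕ × ℕ))) (i : ℕ) : Option ℕ :=
  tauAux ph (i - 1)

/-- validity: every position reaches ⊥ after finitely many steps -/
def BMSValid {α : Type*} (ph : List (α ⊕ (ℕ × ℕ))) (n : ℕ) : Prop :=
  ∀ i, 1 ≤ i → i ≤ n →
    ∃ k, (fun o : Option ℕ => o.bind (tauStep ph))^[k] (some i) = none

noncomputable def bVal {α : Type*} (w : List α) : ℕ :=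
  sInf {k | ∃ ph : List (α ⊕ (ℕ × ℕ)),
      BMSFor w ph ∧ BMSValid ph w.length ∧ ph.length = k}

/-- string attractor -/
def IsAttractor {α : Type*} (w : List α) (Γ : Finset ℕ) : Prop :=
  (∀ p ∈ Γ, 1 ≤ p ∧ p ≤ w.length) ∧
  ∀ u : List α, u ≠ [] → u <:+: w →
    ∃ i, occursAt w u i ∧ ∃ p ∈ Γ, i ≤ p ∧ p ≤ i + u.length - 1

noncomputable def gammaVal {α : Type*} (w : List α) : ℕ :=
  sInf {k | ∃ Γ : Finset ℕ, IsAttractor w Γ ∧ Γ.card = k}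

/-- Thue–Morse words over Bool (`false` = a, `true` = b) -/
def tm : ℕ → List Bool
  | 0 => [false]
  | n + 1 => (tm n).flatMap (fun b => [b, !b])

/-- leftmost occurrence -/
def leftmostOcc {α : Type*} (w v : List α) (i : ℕ) : Prop :=
  occursAt w v i ∧ ∀ i', occursAt w v i' → i ≤ i'

/-- generating pairs of the equivalence `≡_χ` -/
def GenPair {α : Type*} (w : List α) (j j' : ℕ) : Prop :=
  ∃ (y z x : List α) (c c' : α) (i i' : ℕ),
    x ≠ [] ∧
    SupMaxExt w (y ++ x ++ [c]) ∧ SupMaxExt w (z ++ x ++ [c']) ∧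
    (y = [] ∨ z = [] ∨ y.getLast? ≠ z.getLast?) ∧
    leftmostOcc w (y ++ x ++ [c]) i ∧ leftmostOcc w (z ++ x ++ [c']) i' ∧
    ∃ k < x.length, j = i + y.length + k ∧ j' = i' + z.length + k

def chiEquiv {α : Type*} (w : List α) : ℕ → ℕ → Prop := Relation.EqvGen (GenPair w)
theorem stmt0 {α : Type*} (w u : List α) (i : ℕ)
    (hocc : occursAt w u i) (hre : RightExt w u)
    (huniq : ∀ i', occursAt w u i' → i' = i) :
    ∃ j, 1 ≤ j ∧ j ≤ i ∧ SupMaxExt w ((w.drop (j - 1)).take (i + u.length - j)) := by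
  classical
  set S : Set ℕ := {k | ∃ v : List α, RightExt w v ∧ u <:+ v ∧ v.length = k} with hS
  have hne : S.Nonempty := ⟨u.length, u, hre, List.suffix_rfl, rfl⟩
  have hbdd : BddAbove S := by
    refine ⟨w.length, ?_⟩
    rintro k ⟨v, ⟨y, d, d', _, hv, hinf, _⟩, _, rfl⟩
    calc v.length = (y ++ [d]).length := by rw [hv]
    _ ≤ w.length := hinf.length_le
  obtain ⟨v, hvre, hvsuf, hvlen⟩ := Nat.sSup_mem hne hbdd
  obtain ⟨p, rfl⟩ := hvsuf
  have hvinf : (p ++ u) <:+: w := by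
    obtain ⟨y, d, d', _, hv, hinf, _⟩ := hvre
    rw [hv]; exact hinf
  obtain ⟨s, t, hw⟩ := hvinf
  have hwlen : w.length = s.length + (p.length + u.length) + t.length := by
    rw [← hw]; simp; omega
  have hdrop2 : w.drop (s.length + p.length) = u ++ t := by
    rw [← hw, show s ++ (p ++ u) ++ t = (s ++ p) ++ (u ++ t) by simp,
      show s.length + p.length = (s ++ p).length by simp]
    exact List.drop_left
  have hocc2 : occursAt w u (s.length + p.length + 1) := by
    refine ⟨by omega, by omega, ?_⟩
    simp only [Nat.add_sub_cancel, hdrop2]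
    exact List.take_left
  have hi : s.length + p.length + 1 = i := huniq _ hocc2
  refine ⟨s.length + 1, by omega, by omega, ?_⟩
  have hdrop : w.drop s.length = (p ++ u) ++ t := by
    rw [← hw, List.append_assoc]; exact List.drop_left
  have hlen : i + u.length - (s.length + 1) = (p ++ u).length := by simp; omega
  have heq : (w.drop (s.length + 1 - 1)).take (i + u.length - (s.length + 1)) = p ++ u := by
    simp only [Nat.add_sub_cancel, hdrop, hlen]
    exact List.take_left
  rw [heq]
  refine ⟨hvre, ?_⟩
  intro v' hv're hsuf
  have hmem : v'.length ∈ S :=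
    ⟨v', hv're, (List.suffix_append p u).trans hsuf, rfl⟩
  have hle : v'.length ≤ (p ++ u).length := by
    rw [hvlen]; exact le_csSup hbdd hmem
  exact List.IsSuffix.eq_of_length_le hsuf hle
end

section
/- For every string w of length n and every valid bidirectional macro scheme for w with k phrases, there exists a substring equation system of size k that represents w (i.e., w satisfies all constraints and is the unique string of length n over Σ satisfying them). Consequently s(w) ≤ b(w). -/
section MacroScheme

variable {α : Type*}

@[simp]
lemma phraseLen_inl (c : α) : phraseLen (Sum.inl c : α ⊕ (ℕ × ℕ)) = 1 := rfl

@[simp]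
lemma phraseLen_inr (p ℓ : ℕ) : phraseLen (Sum.inr (p, ℓ) : α ⊕ (ℕ × ℕ)) = ℓ := rfl

@[simp]
lemma startPos_zero (ph : List (α ⊕ (ℕ × ℕ))) : startPos ph 0 = 1 := by
  simp [startPos]

lemma startPos_cons_succ (a : α ⊕ (ℕ × ℕ)) (ph : List (α ⊕ (ℕ × ℕ))) (t : ℕ) :
    startPos (a :: ph) (t + 1) = phraseLen a + startPos ph t := by
  simp only [startPos, List.take_succ_cons, List.map_cons, List.sum_cons]
  omega

lemma startPos_succ (ph : List (α ⊕ (ℕ × ℕ))) (t : Fin ph.length) :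
    startPos ph (t + 1) = startPos ph t + phraseLen (ph.get t) := by
  simp only [startPos, List.take_add_one, List.getElem?_eq_getElem t.2, Option.toList_some,
    List.map_append, List.sum_append, List.map_cons, List.map_nil, List.sum_cons, List.sum_nil,
    List.get_eq_getElem]
  omega

lemma startPos_le (ph : List (α ⊕ (ℕ × ℕ))) (t : ℕ) :
    startPos ph t ≤ (ph.map phraseLen).sum + 1 := by
  rw [startPos, List.map_take, add_comm]
  exact Nat.add_le_add_right ((List.take_sublist _ _).sum_le_sum (fun _ _ => Nat.zero_le _)) 1

lemma tauStep_cons_add (a : α ⊕ (ℕ × ℕ)) (ph : List (α ⊕ (ℕ × ℕ))) {j : ℕ} (hj : 1 ≤ j) :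
    tauStep (a :: ph) (phraseLen a + j) = tauStep ph j := by
  rcases a with c | ⟨p, ℓ⟩
  · simp [tauStep, tauAux, show j ≠ 0 by omega]
  · simp [tauStep, tauAux, show ¬ ℓ + j - 1 < ℓ by omega, show ℓ + j - 1 - ℓ = j - 1 by omega]

lemma exists_tauStep_eq (ph : List (α ⊕ (ℕ × ℕ))) {i : ℕ} (hi₀ : 1 ≤ i)
    (hi : i ≤ (ph.map phraseLen).sum) :
    ∃ t : Fin ph.length, startPos ph t ≤ i ∧ i < startPos ph t + phraseLen (ph.get t) ∧
      tauStep ph i =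
        (ph.get t).elim (fun _ => none) (fun pl => some (pl.1 + (i - startPos ph t))) := by
  induction ph generalizing i with
  | nil => simp at hi; omega
  | cons a ph ih =>
    simp only [List.map_cons, List.sum_cons] at hi
    by_cases h : i ≤ phraseLen a
    · refine ⟨⟨0, by simp⟩, by simpa using hi₀, by simp; omega, ?_⟩
      rcases a with c | ⟨p, ℓ⟩
      · simp_all [tauStep, tauAux, show i = 1 by simp at h; omega]
      · simp_all [tauStep, tauAux, show i - 1 < ℓ by simp at h; omega]
    · obtain ⟨j, rfl⟩ : ∃ j, i = phraseLen a + j := ⟨i - phraseLen a, by omega⟩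
      obtain ⟨t, h₁, h₂, h₃⟩ := ih (i := j) (by omega) (by omega)
      refine ⟨t.succ, ?_, ?_, ?_⟩
      · simp only [Fin.val_succ, startPos_cons_succ]; omega
      · simp only [Fin.val_succ, startPos_cons_succ, List.get_cons_succ']; omega
      · rw [tauStep_cons_add a ph (by omega), h₃]
        simp only [Fin.val_succ, startPos_cons_succ, List.get_cons_succ']
        rcases ph.get t with c | ⟨p, ℓ⟩
        · rfl
        · simp only [Sum.elim_inr, Option.some.injEq]; omega

def PhraseHolds (u : List α) (s : ℕ) : α ⊕ (ℕ × ℕ) → Prop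
  | .inl c => u[s - 1]? = some c
  | .inr (p, ℓ) => (u.drop (s - 1)).take ℓ = (u.drop (p - 1)).take ℓ

lemma getElem?_eq_of_phraseHolds {u : List α} {s i : ℕ} {x : α ⊕ (ℕ × ℕ)}
    (hx : PhraseHolds u s x) (hs₀ : 1 ≤ s) (hs : s ≤ i) (hi : i < s + phraseLen x) :
    u[i - 1]? = x.elim some (fun pl => u[pl.1 - 1 + (i - s)]?) := by
  rcases x with c | ⟨p, ℓ⟩
  · simp only [phraseLen_inl] at hi
    rw [show i = s by omega]
    exact hx
  · have h := congrArg (·[i - s]?) hx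
    simp only [List.getElem?_take, List.getElem?_drop, phraseLen_inr] at h hi
    simpa [show i - s < ℓ by omega, show s - 1 + (i - s) = i - 1 by omega] using h

lemma BMSFor.phraseHolds {w : List α} {ph : List (α ⊕ (ℕ × ℕ))} (hbms : BMSFor w ph)
    (t : Fin ph.length) : PhraseHolds w (startPos ph t) (ph.get t) := by
  have h := hbms.2 t t.2
  rcases hx : ph.get t with c | ⟨p, ℓ⟩ <;> simp_all [PhraseHolds]

lemma BMSFor.source_bounds {w : List α} {ph : List (α ⊕ (ℕ × ℕ))} (hbms : BMSFor w ph)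
    {t : Fin ph.length} {p ℓ : ℕ} (hx : ph.get t = .inr (p, ℓ)) :
    1 ≤ ℓ ∧ 1 ≤ p ∧ p + ℓ ≤ w.length + 1 := by
  have h := hbms.2 t t.2
  simp only [Fin.eta, hx] at h
  exact ⟨h.1, h.2.1, h.2.2.1⟩

lemma BMSFor.one_le_phraseLen {w : List α} {ph : List (α ⊕ (ℕ × ℕ))} (hbms : BMSFor w ph)
    (t : Fin ph.length) : 1 ≤ phraseLen (ph.get t) := by
  rcases hx : ph.get t with c | ⟨p, ℓ⟩
  · simp
  · simpa using (hbms.source_bounds hx).1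

lemma BMSFor.startPos_add_phraseLen_le {w : List α} {ph : List (α ⊕ (ℕ × ℕ))}
    (hbms : BMSFor w ph) (t : Fin ph.length) :
    startPos ph t + phraseLen (ph.get t) ≤ w.length + 1 := by
  rw [← startPos_succ, ← hbms.1]
  exact startPos_le ph _

lemma BMSFor.startPos_injective {w : List α} {ph : List (α ⊕ (ℕ × ℕ))} (hbms : BMSFor w ph) :
    Function.Injective (fun t : Fin ph.length => startPos ph t) := by
  have hmono : StrictMonoOn (startPos ph) (Set.Iic ph.length) :=
    strictMonoOn_Iic_of_lt_succ fun t ht => by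
      have h₁ := startPos_succ ph ⟨t, ht⟩
      have h₂ := hbms.one_le_phraseLen ⟨t, ht⟩
      dsimp only at h₁
      rw [Order.succ_eq_add_one]
      omega
  intro t t' h
  exact Fin.ext (hmono.injOn (Set.mem_Iic.2 t.2.le) (Set.mem_Iic.2 t'.2.le) h)

def phraseConstraint (ph : List (α ⊕ (ℕ × ℕ))) (t : Fin ph.length) :
    (ℕ × α) ⊕ (ℕ × ℕ × ℕ) :=
  (ph.get t).map (startPos ph t, ·) (startPos ph t, ·)

open Classical in
noncomputable def sesOfBMS (ph : List (α ⊕ (ℕ × ℕ))) (n : ℕ) : SES α where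
  n := n
  Eqs := (Finset.univ.image (phraseConstraint ph)).toRight
  Ch := (Finset.univ.image (phraseConstraint ph)).toLeft

variable {ph : List (α ⊕ (ℕ × ℕ))} {n : ℕ}

@[simp]
lemma sesOfBMS_n : (sesOfBMS ph n).n = n := rfl

lemma mem_sesOfBMS_eqs {e : ℕ × ℕ × ℕ} :
    e ∈ (sesOfBMS ph n).Eqs ↔ ∃ t, ph.get t = .inr e.2 ∧ startPos ph t = e.1 := by
  simp only [sesOfBMS, Finset.mem_toRight, Finset.mem_image, Finset.mem_univ, true_and,
    phraseConstraint]
  refine exists_congr fun t => ?_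
  rcases ph.get t with c | pl <;> simp [Prod.ext_iff, and_comm, eq_comm]

lemma mem_sesOfBMS_ch {kc : ℕ × α} :
    kc ∈ (sesOfBMS ph n).Ch ↔ ∃ t, ph.get t = .inl kc.2 ∧ startPos ph t = kc.1 := by
  simp only [sesOfBMS, Finset.mem_toLeft, Finset.mem_image, Finset.mem_univ, true_and,
    phraseConstraint]
  refine exists_congr fun t => ?_
  rcases ph.get t with c | pl <;> simp [Prod.ext_iff, and_comm, eq_comm]

lemma sesOfBMS_sat_iff {u : List α} :
    (sesOfBMS ph n).sat u ↔
      u.length = n ∧ ∀ t : Fin ph.length, PhraseHolds u (startPos ph t) (ph.get t) := by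
  refine ⟨fun ⟨hn, heqs, hch⟩ => ⟨hn, fun t => ?_⟩, fun ⟨hn, h⟩ => ⟨hn, ?_, ?_⟩⟩
  · rcases hx : ph.get t with c | ⟨p, ℓ⟩
    · exact hch (startPos ph t, c) (mem_sesOfBMS_ch.2 ⟨t, hx, rfl⟩)
    · exact heqs (startPos ph t, p, ℓ) (mem_sesOfBMS_eqs.2 ⟨t, hx, rfl⟩)
  · rintro ⟨s, p, ℓ⟩ he
    obtain ⟨t, hx, rfl⟩ := mem_sesOfBMS_eqs.1 he
    have ht := h t
    rw [hx] at ht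
    exact ht
  · rintro ⟨s, c⟩ hkc
    obtain ⟨t, hx, rfl⟩ := mem_sesOfBMS_ch.1 hkc
    have ht := h t
    rw [hx] at ht
    exact ht

lemma BMSFor.phraseConstraint_injective {w : List α} (hbms : BMSFor w ph) :
    Function.Injective (phraseConstraint ph) := by
  intro t t' h
  apply hbms.startPos_injective
  simpa [phraseConstraint, Sum.elim_map, Sum.elim_const_const] using
    congrArg (Sum.elim Prod.fst Prod.fst) h

lemma BMSFor.size_sesOfBMS {w : List α} (hbms : BMSFor w ph) :
    (sesOfBMS ph n).size = ph.length := by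
  classical
  rw [SES.size, sesOfBMS, add_comm, Finset.card_toLeft_add_card_toRight,
    Finset.card_image_of_injective _ hbms.phraseConstraint_injective, Finset.card_univ,
    Fintype.card_fin]

lemma BMSFor.valid_sesOfBMS {w : List α} (hbms : BMSFor w ph) :
    (sesOfBMS ph w.length).valid := by
  refine ⟨fun ⟨s, p, ℓ⟩ he => ?_, fun ⟨s, c⟩ hkc => ?_⟩
  · obtain ⟨t, hx, rfl⟩ := mem_sesOfBMS_eqs.1 he
    have hlen := hbms.startPos_add_phraseLen_le t
    have := hbms.source_bounds hx
    simp only [hx, phraseLen_inr] at hlen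
    exact ⟨by simp [startPos], this.2.1, this.1, by simpa using hlen,
      by simpa using this.2.2⟩
  · obtain ⟨t, hx, rfl⟩ := mem_sesOfBMS_ch.1 hkc
    have hlen := hbms.startPos_add_phraseLen_le t
    simp only [hx, phraseLen_inl] at hlen
    exact ⟨by simp [startPos], by simpa using hlen⟩

lemma BMSFor.getElem?_eq_of_iterate_eq_none {w u : List α} (hbms : BMSFor w ph)
    (hu : ∀ t : Fin ph.length, PhraseHolds u (startPos ph t) (ph.get t)) (k : ℕ) {i : ℕ}
    (hi₀ : 1 ≤ i) (hi : i ≤ w.length)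
    (hk : (fun o : Option ℕ => o.bind (tauStep ph))^[k] (some i) = none) :
    u[i - 1]? = w[i - 1]? := by
  induction k generalizing i with
  | zero => simp at hk
  | succ k ih =>
    obtain ⟨t, hs, hsl, hτ⟩ := exists_tauStep_eq ph hi₀ (hbms.1 ▸ hi)
    have hs₀ : 1 ≤ startPos ph t := by simp [startPos]
    rw [getElem?_eq_of_phraseHolds (hu t) hs₀ hs hsl,
      getElem?_eq_of_phraseHolds (hbms.phraseHolds t) hs₀ hs hsl]
    rw [Function.iterate_succ_apply, Option.bind_some, hτ] at hk
    rcases hx : ph.get t with c | ⟨p, ℓ⟩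
    · rfl
    · rw [hx] at hk hsl
      obtain ⟨-, hp, hpℓ⟩ := hbms.source_bounds hx
      simp only [phraseLen_inr] at hsl
      have := ih (i := p + (i - startPos ph t)) (by omega) (by omega) hk
      simpa [show p + (i - startPos ph t) - 1 = p - 1 + (i - startPos ph t) by omega] using this

lemma BMSFor.eq_of_sat_sesOfBMS {w u : List α} (hbms : BMSFor w ph)
    (hvalid : BMSValid ph w.length) (hu : (sesOfBMS ph w.length).sat u) : u = w := by
  obtain ⟨hlen, hu⟩ := sesOfBMS_sat_iff.1 hu
  refine List.ext_getElem? fun m => ?_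
  by_cases hm : m < w.length
  · obtain ⟨k, hk⟩ := hvalid (m + 1) (by omega) (by omega)
    simpa using hbms.getElem?_eq_of_iterate_eq_none hu k (by omega) (by omega) hk
  · rw [List.getElem?_eq_none (by omega), List.getElem?_eq_none (by omega)]

lemma BMSFor.exists_ses {w : List α} (hbms : BMSFor w ph) (hvalid : BMSValid ph w.length) :
    ∃ E : SES α, E.valid ∧ E.represents w ∧ E.size = ph.length :=
  ⟨sesOfBMS ph w.length, hbms.valid_sesOfBMS,
    ⟨sesOfBMS_sat_iff.2 ⟨rfl, hbms.phraseHolds⟩, fun _ hu => hbms.eq_of_sat_sesOfBMS hvalid hu⟩,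
    hbms.size_sesOfBMS⟩

end MacroScheme

theorem stmt3 {α : Type*} (w : List α) (ph : List (α ⊕ (ℕ × ℕ)))
    (hbms : BMSFor w ph) (hvalid : BMSValid ph w.length) :
    (∃ E : SES α, E.valid ∧ E.represents w ∧ E.size = ph.length) ∧
    sVal w ≤ bVal w := by
  refine ⟨hbms.exists_ses hvalid, ?_⟩
  obtain ⟨ph', hbms', hvalid', hlen⟩ : bVal w ∈ {k | ∃ ph : List (α ⊕ (ℕ × ℕ)),
      BMSFor w ph ∧ BMSValid ph w.length ∧ ph.length = k} :=
    Nat.sInf_mem ⟨ph.length, ph, hbms, hvalid, rfl⟩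
  obtain ⟨E, hE, hEw, hsize⟩ := hbms'.exists_ses hvalid'
  exact Nat.sInf_le ⟨E, hE, hEw, hsize.trans hlen⟩
end

section
/- For any substring u of the n-th Thue–Morse word t_n with u ∉ {aba, bab, ab, ba, a, b}, all occurrences of u in t_n start at positions of the same parity. -/
/-! `t_{n+1} = μ(t_n)` is a concatenation of the blocks `ab`, `ba`, each starting at an odd
position. A square `aa` or `bb` of letters therefore only occurs across a block boundary, which
fixes the parity of its position; in particular `t_n` is cube-free. A word without a square of a
letter alternates, and if it is not one of the six excluded words it begins with `abab` or `baba`,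
which can only start at the beginning of a block, since otherwise `t_{n-1}` would contain a cube. -/

theorem List.getElem?_flatMap_pair_two_mul {α : Type*} (f : α → α) (l : List α) (k : ℕ) :
    (l.flatMap fun b => [b, f b])[2 * k]? = l[k]? ∧
      (l.flatMap fun b => [b, f b])[2 * k + 1]? = l[k]?.map f := by
  induction l generalizing k with
  | nil => simp
  | cons a l ih =>
    cases k with
    | zero => simp
    | succ k =>
      rw [show 2 * (k + 1) = 2 * k + 1 + 1 by ring]
      simpa using ih k

theorem tm_getElem?_two_mul (n k : ℕ) : (tm (n + 1))[2 * k]? = (tm n)[k]? :=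
  (List.getElem?_flatMap_pair_two_mul _ _ k).1

theorem tm_getElem?_two_mul_add_one (n k : ℕ) :
    (tm (n + 1))[2 * k + 1]? = (tm n)[k]?.map (!·) :=
  (List.getElem?_flatMap_pair_two_mul _ _ k).2

theorem tm_zero_getElem?_succ (p : ℕ) : (tm 0)[p + 1]? = none := by
  simp [tm]

/-- Each block `t_{n+1}[2k..2k+1] = μ(t_n[k])` consists of two distinct letters, so a square of
letters can only straddle two blocks. -/
theorem tm_index_odd_of_getElem?_eq_succ {n p : ℕ} {b : Bool} (h : (tm n)[p]? = some b)
    (h' : (tm n)[p + 1]? = some b) : p % 2 = 1 := by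
  cases n with
  | zero => simp [tm_zero_getElem?_succ] at h'
  | succ n =>
    obtain ⟨k, rfl | rfl⟩ : ∃ k, p = 2 * k ∨ p = 2 * k + 1 := ⟨p / 2, by omega⟩
    · rw [tm_getElem?_two_mul] at h
      rw [tm_getElem?_two_mul_add_one, h] at h'
      simp at h'
    · omega

theorem tm_not_cube {n p : ℕ} {b : Bool} (h : (tm n)[p]? = some b)
    (h₁ : (tm n)[p + 1]? = some b) (h₂ : (tm n)[p + 2]? = some b) : False := by
  have := tm_index_odd_of_getElem?_eq_succ h h₁
  have := tm_index_odd_of_getElem?_eq_succ h₁ h₂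
  omega

/-- If `s = 2m + 1` is odd, the letters at `s`, `s + 1`, `s + 3` of `t_{n+1}` are
`!t_n[m]`, `t_n[m+1]`, `t_n[m+2]`, which would form a cube in `t_n`. -/
theorem tm_index_even_of_alternating {n s : ℕ} {a : Bool} (h₀ : (tm n)[s]? = some a)
    (h₁ : (tm n)[s + 1]? = some !a) (h₃ : (tm n)[s + 3]? = some !a) : s % 2 = 0 := by
  cases n with
  | zero => simp [tm_zero_getElem?_succ] at h₃
  | succ n =>
    by_contra hs
    obtain ⟨m, rfl⟩ : ∃ m, s = 2 * m + 1 := ⟨s / 2, by omega⟩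
    rw [tm_getElem?_two_mul_add_one] at h₀
    rw [show 2 * m + 1 + 1 = 2 * (m + 1) by ring, tm_getElem?_two_mul] at h₁
    rw [show 2 * m + 1 + 3 = 2 * (m + 2) by ring, tm_getElem?_two_mul] at h₃
    obtain ⟨b, hb, hba⟩ := Option.map_eq_some_iff.mp h₀
    obtain rfl : b = !a := by simpa using congrArg (!·) hba
    exact tm_not_cube hb h₁ h₃

theorem occursAt.getElem?_eq {α : Type*} {w u : List α} {i k : ℕ} {c : α}
    (h : occursAt w u i) (hk : u[k]? = some c) : w[i - 1 + k]? = some c := by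
  obtain ⟨-, -, hwu⟩ := h
  have hklt : k < u.length := (List.getElem?_eq_some_iff.mp hk).1
  rw [← hk, ← hwu, List.getElem?_take_of_lt hklt, List.getElem?_drop]

theorem List.exists_square_or_alternating_prefix (u : List Bool) (hne : u ≠ [])
    (hexc : u ∉ ([[false, true, false], [true, false, true], [false, true],
      [true, false], [false], [true]] : List (List Bool))) :
    (∃ k b, u[k]? = some b ∧ u[k + 1]? = some b) ∨
      ∃ a rest, u = a :: (!a) :: a :: (!a) :: rest := by
  rcases u with _ | ⟨a, _ | ⟨b, _ | ⟨c, _ | ⟨d, rest⟩⟩⟩⟩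
  · exact absurd rfl hne
  · cases a <;> exact (hexc (by decide)).elim
  · cases a <;> cases b <;> first | exact (hexc (by decide)).elim | exact .inl ⟨0, _, rfl, rfl⟩
  · cases a <;> cases b <;> cases c <;>
      first
        | exact (hexc (by decide)).elim
        | exact .inl ⟨0, _, rfl, rfl⟩
        | exact .inl ⟨1, _, rfl, rfl⟩
  · cases a <;> cases b <;> cases c <;> cases d <;>
      first
        | exact .inr ⟨_, rest, rfl⟩
        | exact .inl ⟨0, _, rfl, rfl⟩
        | exact .inl ⟨1, _, rfl, rfl⟩
        | exact .inl ⟨2, _, rfl, rfl⟩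

theorem stmt5 (n : ℕ) (u : List Bool) (i j : ℕ)
    (hne : u ≠ [])
    (hexc : u ∉ ([[false, true, false], [true, false, true], [false, true],
      [true, false], [false], [true]] : List (List Bool)))
    (hi : occursAt (tm n) u i) (hj : occursAt (tm n) u j) :
    i % 2 = j % 2 := by
  have hi_pos := hi.1
  have hj_pos := hj.1
  rcases u.exists_square_or_alternating_prefix hne hexc with
    ⟨k, b, hk, hk₁⟩ | ⟨a, rest, rfl⟩
  · have := tm_index_odd_of_getElem?_eq_succ (hi.getElem?_eq hk) (hi.getElem?_eq hk₁)
    have := tm_index_odd_of_getElem?_eq_succ (hj.getElem?_eq hk) (hj.getElem?_eq hk₁)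
    omega
  · have h_even {m : ℕ} (hm : occursAt (tm n) (a :: (!a) :: a :: (!a) :: rest) m) :
        (m - 1) % 2 = 0 :=
      tm_index_even_of_alternating (hm.getElem?_eq (k := 0) rfl) (hm.getElem?_eq (k := 1) rfl)
        (hm.getElem?_eq (k := 3) rfl)
    have := h_even hi
    have := h_even hj
    omega
end

section
/- The minimum size s(t_n) of a substring equation system representing the n-th Thue–Morse word t_n satisfies s(t_n) = Θ(n); in particular there exist constants c_1, c_2 > 0 such that c_1·n ≤ s(t_n) ≤ c_2·n for all sufficiently large n. -/
theorem flat_not (l : List Bool) :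
    (l.map (fun b => !b)).flatMap (fun b => [b, !b])
      = (l.flatMap (fun b => [b, !b])).map (fun b => !b) := by
  induction l with
  | nil => rfl
  | cons c t ih => simp [ih]

theorem tm_succ (n : ℕ) : tm (n+1) = tm n ++ (tm n).map (fun b => !b) := by
  induction n with
  | zero => rfl
  | succ n ih =>
    show (tm (n+1)).flatMap _ = _
    conv_lhs => rw [ih]
    rw [List.flatMap_append, flat_not]
    rfl

theorem tm_length (n : ℕ) : (tm n).length = 2^n := by
  induction n with
  | zero => rfl
  | succ n ih => rw [tm_succ]; simp [ih]; ring

theorem tm_prefix {m n : ℕ} (h : m ≤ n) : tm m <+: tm n := by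
  induction n with
  | zero => simp_all
  | succ n ih =>
    rcases Nat.lt_or_ge m (n+1) with h'|h'
    · exact (ih (by omega)).trans ⟨(tm n).map (fun b => !b), (tm_succ n).symm⟩
    · have : m = n+1 := by omega
      subst this; exact List.prefix_rfl

-- pointwise lemmas
theorem flat_get_even (l : List Bool) (j : ℕ) :
    (l.flatMap (fun b => [b, !b]))[2*j]? = l[j]? := by
  induction l generalizing j with
  | nil => simp
  | cons c t ih =>
    cases j with
    | zero => simp
    | succ j =>
      have : 2*(j+1) = (2*j+1)+1 := by ring
      simp only [List.flatMap_cons, this]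
      simpa using ih j

theorem flat_get_odd (l : List Bool) (j : ℕ) :
    (l.flatMap (fun b => [b, !b]))[2*j+1]? = (l[j]?).map (fun b => !b) := by
  induction l generalizing j with
  | nil => simp
  | cons c t ih =>
    cases j with
    | zero => simp
    | succ j =>
      have : 2*(j+1)+1 = ((2*j+1)+1)+1 := by ring
      simp only [List.flatMap_cons, this]
      simpa using ih j

theorem tm_even (n j : ℕ) : (tm (n+1))[2*j]? = (tm n)[j]? := flat_get_even _ _
theorem tm_odd (n j : ℕ) :
    (tm (n+1))[2*j+1]? = ((tm n)[j]?).map (fun b => !b) := flat_get_odd _ _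

theorem tm_pairflip (n j : ℕ) :
    (tm (n+1))[2*j+1]? = ((tm (n+1))[2*j]?).map (fun b => !b) := by
  rw [tm_even, tm_odd]

lemma map_not_ne {o : Option Bool} (hs : o.isSome) : o.map (fun b => !b) ≠ o := by
  cases o with
  | none => simp at hs
  | some b => simp

lemma map_not_not (o : Option Bool) :
    (o.map (fun b => !b)).map (fun b => !b) = o := by cases o <;> simp

lemma tm_some {n j : ℕ} (h : j < 2^n) : ((tm n)[j]?).isSome := by
  rw [List.getElem?_eq_getElem (by rw [tm_length]; exact h)]; rfl

theorem tm_no_triple (m j : ℕ) (h : j + 2 < 2^m) :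
    ¬ ((tm m)[j]? = (tm m)[j+1]? ∧ (tm m)[j+1]? = (tm m)[j+2]?) := by
  rintro ⟨h1, h2⟩
  match m with
  | 0 => norm_num at h
  | n+1 =>
    rcases Nat.even_or_odd j with ⟨r, hr⟩ | ⟨r, hr⟩
    · -- j = 2r
      have hp := tm_pairflip n r
      rw [show 2*r+1 = j+1 by omega, show 2*r = j by omega] at hp
      rw [hp] at h1
      exact map_not_ne (tm_some (show j < 2^(n+1) by omega)) h1.symm
    · -- j+1 = 2(r+1)
      have hp := tm_pairflip n (r+1)
      rw [show 2*(r+1)+1 = j+2 by omega, show 2*(r+1) = j+1 by omega] at hp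
      rw [hp] at h2
      exact map_not_ne (tm_some (show j+1 < 2^(n+1) by omega)) h2.symm

theorem tm_sync_aux (n a b ℓ : ℕ) (ha : a + ℓ ≤ 2^n) (hl : 5 ≤ ℓ)
    (heq : ∀ t < ℓ, (tm n)[a+t]? = (tm n)[b+t]?)
    (ha2 : a % 2 = 0) (hb2 : b % 2 = 1) : False := by
  have hn : 3 ≤ n := by
    by_contra h
    interval_cases n <;> omega
  obtain ⟨n', rfl⟩ : ∃ n', n = n'+1 := ⟨n-1, by omega⟩
  set i := a / 2 with hi
  have hA : ∀ s, s + 1 < ℓ → (tm (n'+1))[a+s+1]? = ((tm (n'+1))[a+s]?).map (fun b => !b) := by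
    intro s hs
    rcases Nat.even_or_odd s with ⟨u, hu⟩ | ⟨u, hu⟩
    · have hp := tm_pairflip n' (i+u)
      rw [show 2*(i+u)+1 = a+s+1 by omega, show 2*(i+u) = a+s by omega] at hp
      exact hp
    · have hp := tm_pairflip n' (b/2+u+1)
      rw [show 2*(b/2+u+1)+1 = b+s+1 by omega, show 2*(b/2+u+1) = b+s by omega] at hp
      have e1 := heq (s+1) hs
      have e2 := heq s (by omega)
      rw [show b+(s+1) = b+s+1 by omega] at e1
      rw [show a+(s+1) = a+s+1 by omega] at e1
      rw [e1, hp, e2]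
  have k0 : (tm (n'+1))[a+2]? = (tm (n'+1))[a]? := by
    have h1 := hA 0 (by omega)
    have h2 := hA 1 (by omega)
    rw [show a+0 = a by omega] at h1
    rw [show a+1+1 = a+2 by omega] at h2
    rw [h2, h1, map_not_not]
  have k1 : (tm (n'+1))[a+4]? = (tm (n'+1))[a+2]? := by
    have h1 := hA 2 (by omega)
    have h2 := hA 3 (by omega)
    rw [show a+2+1 = a+3 by omega] at h1
    rw [show a+3+1 = a+4 by omega] at h2
    rw [h2, h1, map_not_not]
  have e0 : (tm (n'+1))[a]? = (tm n')[i]? := by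
    have := tm_even n' i; rw [show 2*i = a by omega] at this; exact this
  have e1 : (tm (n'+1))[a+2]? = (tm n')[i+1]? := by
    have := tm_even n' (i+1); rw [show 2*(i+1) = a+2 by omega] at this; exact this
  have e2 : (tm (n'+1))[a+4]? = (tm n')[i+2]? := by
    have := tm_even n' (i+2); rw [show 2*(i+2) = a+4 by omega] at this; exact this
  have hpow : 2^(n'+1) = 2*2^n' := by rw [pow_succ]; ring
  exact tm_no_triple n' i (by omega) ⟨by rw [← e0, ← e1, k0], by rw [← e1, ← e2, k1]⟩

theorem tm_sync (n a b ℓ : ℕ) (ha : a + ℓ ≤ 2^n) (hb : b + ℓ ≤ 2^n) (hl : 5 ≤ ℓ)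
    (heq : ∀ t < ℓ, (tm n)[a+t]? = (tm n)[b+t]?) : a % 2 = b % 2 := by
  rcases Nat.lt_or_ge (a % 2) 1 with h1 | h1 <;> rcases Nat.lt_or_ge (b % 2) 1 with h2 | h2
  · omega
  · exact absurd (tm_sync_aux n a b ℓ ha hl heq (by omega) (by omega)) (by simp)
  · exact absurd (tm_sync_aux n b a ℓ hb hl (fun t ht => (heq t ht).symm) (by omega) (by omega)) (by simp)
  · omega

theorem tm_half {n a b ℓ : ℕ} (ha2 : a % 2 = 0) (hb2 : b % 2 = 0)
    (heq : ∀ t < ℓ, (tm (n+1))[a+t]? = (tm (n+1))[b+t]?) :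
    ∀ t < (ℓ+1)/2, (tm n)[a/2+t]? = (tm n)[b/2+t]? := by
  intro t ht
  have h2t : 2*t < ℓ := by omega
  have h := heq (2*t) h2t
  rw [show a + 2*t = 2*(a/2+t) by omega, show b + 2*t = 2*(b/2+t) by omega] at h
  rw [← tm_even n (a/2+t), ← tm_even n (b/2+t)]
  exact h

theorem tm_key (k : ℕ) : ∀ n a b ℓ : ℕ, a + ℓ ≤ 2^n → b + ℓ ≤ 2^n →
    (∀ t < ℓ, (tm n)[a+t]? = (tm n)[b+t]?) → 6 * 2^k ≤ ℓ + 4 →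
    2^k ∣ ((b - a) + (a - b)) := by
  induction k with
  | zero => intro n a b ℓ _ _ _ _; simp
  | succ k ih =>
    intro n a b ℓ ha hb heq hl
    have h2k : 1 ≤ 2^k := Nat.one_le_two_pow
    rw [pow_succ] at hl
    have hl8 : 8 ≤ ℓ := by omega
    have hpar := tm_sync n a b ℓ ha hb (by omega) heq
    have hn : 3 ≤ n := by
      by_contra h
      interval_cases n <;> omega
    obtain ⟨n', rfl⟩ : ∃ n', n = n'+1 := ⟨n-1, by omega⟩
    have hpow : 2^(n'+1) = 2*2^n' := by rw [pow_succ]; ring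
    -- normalize to even start positions
    obtain ⟨a', b', ℓ', ha2, hb2, hab, hll, ha', hb', heq'⟩ :
        ∃ a' b' ℓ', a' % 2 = 0 ∧ b' % 2 = 0 ∧
          ((b - a) + (a - b) = (b' - a') + (a' - b')) ∧ (ℓ ≤ ℓ' + 1) ∧
          a' + ℓ' ≤ 2^(n'+1) ∧ b' + ℓ' ≤ 2^(n'+1) ∧
          (∀ t < ℓ', (tm (n'+1))[a'+t]? = (tm (n'+1))[b'+t]?) := by
      rcases Nat.lt_or_ge (a % 2) 1 with h1 | h1
      · exact ⟨a, b, ℓ, by omega, by omega, by omega, by omega, ha, hb, heq⟩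
      · refine ⟨a+1, b+1, ℓ-1, by omega, by omega, by omega, by omega, by omega, by omega, ?_⟩
        intro t ht
        have := heq (t+1) (by omega)
        rw [show a + (t+1) = a+1+t by omega, show b + (t+1) = b+1+t by omega] at this
        exact this
    have hd := tm_half ha2 hb2 heq'
    have ihh := ih n' (a'/2) (b'/2) ((ℓ'+1)/2)
      (by omega) (by omega) hd (by omega)
    obtain ⟨c, hc⟩ := ihh
    refine ⟨c, ?_⟩
    rw [pow_succ, show 2^k * 2 * c = 2 * (2^k * c) by ring, ← hc]
    omega

theorem dt_iff {α : Type*} (w : List α) (a b ℓ : ℕ) :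
    (w.drop a).take ℓ = (w.drop b).take ℓ ↔ ∀ t < ℓ, w[a+t]? = w[b+t]? := by
  constructor
  · intro h t ht
    have h2 : ((w.drop a).take ℓ)[t]? = ((w.drop b).take ℓ)[t]? := by rw [h]
    simpa [List.getElem?_take, List.getElem?_drop, ht] using h2
  · intro h
    apply List.ext_getElem?
    intro t
    rcases Nat.lt_or_ge t ℓ with ht | ht
    · simpa [List.getElem?_take, List.getElem?_drop, ht] using h t ht
    · rw [List.getElem?_eq_none, List.getElem?_eq_none] <;>
        simp [List.length_take, List.length_drop] <;> omega

theorem prefix_getElem? {α : Type*} {u w : List α} (h : u <+: w) {i : ℕ}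
    (hi : i < u.length) : w[i]? = u[i]? := by
  obtain ⟨r, rfl⟩ := h
  simp [List.getElem?_append, hi]

theorem prefix_dt {α : Type*} {u w : List α} (h : u <+: w) {a ℓ : ℕ}
    (hl : a + ℓ ≤ u.length) : (w.drop a).take ℓ = (u.drop a).take ℓ := by
  obtain ⟨r, rfl⟩ := h
  rw [List.drop_append, show a - u.length = 0 by omega, List.drop_zero,
    List.take_append, show ℓ - (u.drop a).length = 0 by simp; omega,
    List.take_zero, List.append_nil]

theorem tm_struct (k : ℕ) :
    tm (k+2) = tm k ++ ((tm k).map (fun b => !b) ++ ((tm k).map (fun b => !b) ++ tm k)) := by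
  rw [tm_succ, tm_succ]
  simp [List.map_map, Function.comp_def, Bool.not_not]

theorem tm_ST1 (k : ℕ) :
    ((tm (k+2)).drop (2^k)).take (2^k) = ((tm (k+2)).drop (2^(k+1))).take (2^k) := by
  set A := tm k with hA'
  set N := A.map (fun b => !b) with hN
  have hA : A.length = 2^k := tm_length _
  have hNl : N.length = 2^k := by rw [hN, List.length_map, hA]
  have e1 : (tm (k+2)).drop (2^k) = N ++ (N ++ A) := by
    rw [tm_struct, ← hA', ← hN, ← hA, List.drop_left]
  have e2 : (tm (k+2)).drop (2^(k+1)) = N ++ A := by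
    rw [tm_struct, ← hA', ← hN, ← List.append_assoc,
      show 2^(k+1) = (A ++ N).length by simp [hA, hNl]; ring, List.drop_left]
  rw [e1, e2, ← hNl, List.take_left, List.take_left]

theorem tm_ST2 (k : ℕ) :
    ((tm (k+2)).drop 0).take (2^k) = ((tm (k+2)).drop (3*2^k)).take (2^k) := by
  set A := tm k with hA'
  set N := A.map (fun b => !b) with hN
  have hA : A.length = 2^k := tm_length _
  have hNl : N.length = 2^k := by rw [hN, List.length_map, hA]
  have e2 : (tm (k+2)).drop (3*2^k) = A := by
    rw [tm_struct, ← hA', ← hN, ← List.append_assoc, ← List.append_assoc,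
      show 3*2^k = ((A ++ N) ++ N).length by simp [hA, hNl]; ring, List.drop_left]
  rw [e2, List.drop_zero, tm_struct, ← hA', ← hN, ← hA, List.take_left,
    List.take_length]

theorem tm_eqE {k n : ℕ} (h : k + 2 ≤ n) :
    ((tm n).drop (2^k)).take (2^k) = ((tm n).drop (2^(k+1))).take (2^k) := by
  have hlen : (tm (k+2)).length = 2^(k+2) := tm_length _
  have hpow : 2^(k+2) = 2^k+2^k+2^k+2^k := by ring
  have hpow1 : 2^(k+1) = 2^k+2^k := by ring
  rw [prefix_dt (tm_prefix h) (by omega), prefix_dt (tm_prefix h) (by omega), tm_ST1]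

theorem tm_eqF {k n : ℕ} (h : k + 2 ≤ n) :
    ((tm n).drop 0).take (2^k) = ((tm n).drop (3*2^k)).take (2^k) := by
  have hlen : (tm (k+2)).length = 2^(k+2) := tm_length _
  have hpow : 2^(k+2) = 2^k+2^k+2^k+2^k := by ring
  rw [prefix_dt (tm_prefix h) (by omega), prefix_dt (tm_prefix h) (by omega), tm_ST2]

-- the upper bound system
def EU (n : ℕ) : SES Bool where
  n := 2^n
  Eqs := ((Finset.range (n-1)).image fun k => (2^k+1, 2^(k+1)+1, 2^k)) ∪
    ((Finset.range (n-1)).image fun k => (1, 3*2^k+1, 2^k))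
  Ch := {(1, false), (2, true)}

theorem EU_valid (n : ℕ) (hn : 2 ≤ n) : (EU n).valid := by
  constructor
  · intro e he
    rcases Finset.mem_union.1 he with h | h <;>
        obtain ⟨k, hk, rfl⟩ := Finset.mem_image.1 h <;>
        simp only [Finset.mem_range] at hk <;>
        have hp : 2^(k+2) ≤ 2^n := Nat.pow_le_pow_right (by norm_num) (by omega) <;>
        have h1 : 2^(k+2) = 2^k+2^k+2^k+2^k := by ring
    · have hk0 : 1 ≤ 2^k := Nat.one_le_two_pow
      have h2 : 2^(k+1) = 2^k+2^k := by ring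
      refine ⟨?_, ?_, ?_, ?_, ?_⟩
      · show 1 ≤ 2^k+1; omega
      · show 1 ≤ 2^(k+1)+1; omega
      · show 1 ≤ 2^k; omega
      · show 2^k+1+2^k ≤ 2^n+1; omega
      · show 2^(k+1)+1+2^k ≤ 2^n+1; omega
    · have hk0 : 1 ≤ 2^k := Nat.one_le_two_pow
      refine ⟨?_, ?_, ?_, ?_, ?_⟩
      · show 1 ≤ 1; omega
      · show 1 ≤ 3*2^k+1; omega
      · show 1 ≤ 2^k; omega
      · show 1+2^k ≤ 2^n+1; omega
      · show 3*2^k+1+2^k ≤ 2^n+1; omega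
  · intro kc hkc
    have h4 : 4 ≤ 2^n := by
      calc 4 = 2^2 := rfl
      _ ≤ 2^n := Nat.pow_le_pow_right (by norm_num) hn
    simp only [EU, Finset.mem_insert, Finset.mem_singleton] at hkc
    rcases hkc with rfl | rfl
    · exact ⟨le_refl 1, by show (1:ℕ) ≤ 2^n; omega⟩
    · exact ⟨by omega, by show (2:ℕ) ≤ 2^n; omega⟩

theorem EU_sat (n : ℕ) (hn : 2 ≤ n) : (EU n).sat (tm n) := by
  refine ⟨tm_length n, ?_, ?_⟩
  · intro e he
    rcases Finset.mem_union.1 he with h | h <;>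
      obtain ⟨k, hk, rfl⟩ := Finset.mem_image.1 h <;>
      simp only [Finset.mem_range] at hk <;>
      simp only [Nat.add_sub_cancel]
    · exact tm_eqE (by omega)
    · exact tm_eqF (by omega)
  · intro kc hkc
    have hp : tm 2 <+: tm n := tm_prefix hn
    have h2 : tm 2 = [false, true, true, false] := rfl
    simp only [EU, Finset.mem_insert, Finset.mem_singleton] at hkc
    rcases hkc with rfl | rfl <;>
      dsimp only <;>
      rw [prefix_getElem? hp (by rw [h2]; simp)] <;> rw [h2] <;> rfl

theorem EU_facts (n : ℕ) (u : List Bool) (hu : (EU n).sat u) :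
    (u[0]? = some false) ∧ (u[1]? = some true) ∧
    (∀ k, k < n-1 → ∀ t < 2^k, u[2^k+t]? = u[2^(k+1)+t]?) ∧
    (∀ k, k < n-1 → ∀ t < 2^k, u[t]? = u[3*2^k+t]?) := by
  obtain ⟨hul, hueq, huch⟩ := hu
  refine ⟨?_, ?_, ?_, ?_⟩
  · have := huch (1, false) (by simp [EU])
    simpa using this
  · have := huch (2, true) (by simp [EU])
    simpa using this
  · intro k hk t ht
    have hmem : (2^k+1, 2^(k+1)+1, 2^k) ∈ (EU n).Eqs :=
      Finset.mem_union_left _ (Finset.mem_image.2 ⟨k, Finset.mem_range.2 hk, rfl⟩)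
    have h := hueq _ hmem
    simp only [Nat.add_sub_cancel] at h
    exact (dt_iff u _ _ _).1 h t ht
  · intro k hk t ht
    have hmem : (1, 3*2^k+1, 2^k) ∈ (EU n).Eqs :=
      Finset.mem_union_right _ (Finset.mem_image.2 ⟨k, Finset.mem_range.2 hk, rfl⟩)
    have h := hueq _ hmem
    simp only [Nat.add_sub_cancel] at h
    have := (dt_iff u _ _ _).1 h t ht
    simpa using this

theorem EU_uniq (n : ℕ) {w w' : List Bool} (hw : (EU n).sat w)
    (hw' : (EU n).sat w') : w = w' := by
  obtain ⟨c0, c1, eE, eF⟩ := EU_facts n w hw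
  obtain ⟨c0', c1', eE', eF'⟩ := EU_facts n w' hw'
  have lw : w.length = 2^n := hw.1
  have lw' : w'.length = 2^n := hw'.1
  apply List.ext_getElem?
  intro p
  induction p using Nat.strong_induction_on with
  | _ p IH =>
    rcases Nat.lt_or_ge p (2^n) with hp | hp
    · rcases Nat.lt_or_ge p 2 with hp2 | hp2
      · interval_cases p
        · rw [c0, c0']
        · rw [c1, c1']
      · set m := Nat.log 2 p with hm
        have h1 : 2^m ≤ p := Nat.pow_log_le_self 2 (by omega)
        have h2 : p < 2^(m+1) := Nat.lt_pow_succ_log_self (by norm_num) p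
        have hm1 : 1 ≤ m := (Nat.le_log_iff_pow_le (by norm_num) (by omega)).2 (by simpa using hp2)
        have hmn : m < n := (Nat.pow_lt_pow_iff_right (by norm_num)).1 (lt_of_le_of_lt h1 hp)
        set k := m - 1 with hk
        have hkm : m = k+1 := by omega
        have hkn : k < n - 1 := by omega
        have hpow : 2^(k+1) = 2^k + 2^k := by ring
        have hpow2 : 2^(k+1+1) = 2^k+2^k+2^k+2^k := by ring
        have hk0 : 1 ≤ 2^k := Nat.one_le_two_pow
        rw [hkm] at h1 h2
        rcases Nat.lt_or_ge p (3*2^k) with hc | hc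
        · set t := p - 2^(k+1) with ht'
          have ht : t < 2^k := by omega
          have e1 := eE k hkn t ht
          have e2 := eE' k hkn t ht
          have hpt : 2^(k+1)+t = p := by omega
          rw [hpt] at e1 e2
          rw [← e1, ← e2]
          exact IH _ (by omega)
        · set t := p - 3*2^k with ht'
          have ht : t < 2^k := by omega
          have e1 := eF k hkn t ht
          have e2 := eF' k hkn t ht
          have hpt : 3*2^k+t = p := by omega
          rw [hpt] at e1 e2
          rw [← e1, ← e2]
          exact IH t (by omega)
    · rw [List.getElem?_eq_none (by omega), List.getElem?_eq_none (by omega)]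

theorem EU_represents (n : ℕ) (hn : 2 ≤ n) : (EU n).represents (tm n) :=
  ⟨EU_sat n hn, fun _ h => EU_uniq n h (EU_sat n hn)⟩

theorem sval_upper (n : ℕ) (hn : 2 ≤ n) : sVal (tm n) ≤ 2*n := by
  have h1 : sVal (tm n) ≤ (EU n).size :=
    Nat.sInf_le ⟨EU n, EU_valid n hn, EU_represents n hn, rfl⟩
  have hch : ({(1, false), (2, true)} : Finset (ℕ × Bool)).card ≤ 2 :=
    le_trans (Finset.card_insert_le _ _) (by simp)
  have heq : (EU n).Eqs.card ≤ (n-1) + (n-1) :=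
    le_trans (Finset.card_union_le _ _)
      (add_le_add (le_trans (Finset.card_image_le) (by simp))
        (le_trans (Finset.card_image_le) (by simp)))
  have : (EU n).size = (EU n).Eqs.card + (EU n).Ch.card := rfl
  have hchh : (EU n).Ch.card ≤ 2 := hch
  omega

def nu (q : ℕ) : ℕ := q.factorization 2

lemma nu_dvd_iff {q : ℕ} (hq : q ≠ 0) (j : ℕ) : 2^j ∣ q ↔ j ≤ nu q :=
  Nat.Prime.pow_dvd_iff_le_factorization Nat.prime_two hq

lemma nu_pow (v : ℕ) : nu (2^v) = v := by
  simp [nu, Nat.Prime.factorization_pow Nat.prime_two, Finsupp.single_eq_same]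

lemma nu_add {x d κ : ℕ} (hx : x ≠ 0) (hd : 2^κ ∣ d) (hlt : nu x < κ) :
    nu (x + d) = nu x := by
  have hxd : x + d ≠ 0 := by omega
  have h1 : 2^(nu x) ∣ x := (nu_dvd_iff hx _).2 le_rfl
  have h2 : 2^(nu x) ∣ d := dvd_trans (pow_dvd_pow 2 hlt.le) hd
  have h3 : 2^(nu x) ∣ x + d := h1.add h2
  have hle : nu x ≤ nu (x+d) := (nu_dvd_iff hxd _).1 h3
  have hge : nu (x+d) ≤ nu x := by
    by_contra hcon
    have hc1 : 2^(nu x + 1) ∣ x+d := (nu_dvd_iff hxd _).2 (by omega)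
    have h5 : 2^(nu x + 1) ∣ d := dvd_trans (pow_dvd_pow 2 (by omega)) hd
    have h6 : 2^(nu x + 1) ∣ x := by
      have := Nat.dvd_sub hc1 h5
      rwa [Nat.add_sub_cancel] at this
    have := (nu_dvd_iff hx _).1 h6
    omega
  omega

lemma flag_iff {x d κ v : ℕ} (hx : x ≠ 0) (hd : 2^κ ∣ d)
    (hxv : 2^κ ∣ x → nu x ≠ v) (hyv : 2^κ ∣ (x+d) → nu (x+d) ≠ v) :
    (nu x = v ↔ nu (x+d) = v) := by
  by_cases hdx : 2^κ ∣ x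
  · simp [hxv hdx, hyv (hdx.add hd)]
  · have hlt : nu x < κ := by
      by_contra h
      exact hdx (dvd_trans (pow_dvd_pow 2 (by omega)) ((nu_dvd_iff hx _).2 le_rfl))
    rw [nu_add hx hd hlt]

lemma cardFilter (i ℓ m : ℕ) (hm : 0 < m) (hl : ℓ ≤ 12*m) :
    ((Finset.range ℓ).filter (fun t => m ∣ (i+t))).card ≤ 14 := by
  have key : ((Finset.range ℓ).filter (fun t => m ∣ (i+t))).card ≤
      (Finset.Icc (i/m) ((i+ℓ)/m)).card := by
    apply Finset.card_le_card_of_injOn (fun t => (i+t)/m)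
    · intro t ht
      simp only [Finset.mem_coe, Finset.mem_filter, Finset.mem_range] at ht
      simp only [Finset.mem_coe, Finset.mem_Icc]
      exact ⟨Nat.div_le_div_right (by omega), Nat.div_le_div_right (by omega)⟩
    · intro t1 h1 t2 h2 heq
      simp only [Finset.mem_coe, Finset.mem_filter, Finset.mem_range] at h1 h2
      have e1 : (i+t1)/m*m = i+t1 := Nat.div_mul_cancel h1.2
      have e2 : (i+t2)/m*m = i+t2 := Nat.div_mul_cancel h2.2
      simp only at heq
      rw [heq] at e1
      omega
  have hcard : (Finset.Icc (i/m) ((i+ℓ)/m)).card = (i+ℓ)/m + 1 - i/m := Nat.card_Icc _ _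
  have hdiv : (i+ℓ)/m = i/m + ℓ/m + if m ≤ i%m + ℓ%m then 1 else 0 := Nat.add_div hm
  have hl12 : ℓ/m ≤ 12 := by
    have h := Nat.div_le_div_right (c := m) hl
    rwa [Nat.mul_div_cancel _ hm] at h
  split_ifs at hdiv <;> omega

/-- bad values contributed by one equation -/
def Beq (e : ℕ × ℕ × ℕ) : Finset ℕ :=
  if e.1 = e.2.1 then ∅ else
  ((Finset.range e.2.2).filter (fun t => 2^(nu ((e.2.1-e.1)+(e.1-e.2.1))) ∣ (e.1+t))).image
      (fun t => nu (e.1+t)) ∪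
  ((Finset.range e.2.2).filter (fun t => 2^(nu ((e.2.1-e.1)+(e.1-e.2.1))) ∣ (e.2.1+t))).image
      (fun t => nu (e.2.1+t))

def Bset (E : SES Bool) : Finset ℕ := E.Ch.image (fun kc => nu kc.1) ∪ E.Eqs.biUnion Beq

section Lower
variable {n : ℕ} {E : SES Bool}

/-- basic consequences -/
lemma eq_bound (hval : E.valid) (hsat : E.sat (tm n)) {e : ℕ × ℕ × ℕ}
    (he : e ∈ E.Eqs) (hne : e.1 ≠ e.2.1) :
    2^(nu ((e.2.1-e.1)+(e.1-e.2.1))) ∣ ((e.2.1-e.1)+(e.1-e.2.1)) ∧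
    e.2.2 ≤ 12 * 2^(nu ((e.2.1-e.1)+(e.1-e.2.1))) := by
  obtain ⟨i, i', ℓ⟩ := e
  simp only at hne ⊢
  have hEn : E.n = 2^n := by rw [← hsat.1, tm_length]
  obtain ⟨h1, h2, h3, h4, h5⟩ := hval.1 _ he
  simp only at h1 h2 h3 h4 h5
  rw [hEn] at h4 h5
  set d := (i'-i)+(i-i') with hd
  have hd0 : d ≠ 0 := by omega
  have hdvd : 2^(nu d) ∣ d := (nu_dvd_iff hd0 _).2 le_rfl
  refine ⟨hdvd, ?_⟩
  by_contra hcon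
  push_neg at hcon
  -- apply tm_key at level nu d + 1
  have hpt : ∀ t < ℓ, (tm n)[(i-1)+t]? = (tm n)[(i'-1)+t]? :=
    (dt_iff _ _ _ _).1 (hsat.2.1 _ he)
  have hkey := tm_key (nu d + 1) n (i-1) (i'-1) ℓ (by omega) (by omega) hpt
    (by rw [pow_succ]; omega)
  have hrw : ((i'-1) - (i-1)) + ((i-1) - (i'-1)) = d := by omega
  rw [hrw] at hkey
  have := (nu_dvd_iff hd0 _).1 hkey
  omega

lemma Beq_card (hval : E.valid) (hsat : E.sat (tm n)) {e : ℕ × ℕ × ℕ}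
    (he : e ∈ E.Eqs) : (Beq e).card ≤ 28 := by
  by_cases hne : e.1 = e.2.1
  · simp [Beq, hne]
  · obtain ⟨hdvd, hbound⟩ := eq_bound hval hsat he hne
    rw [Beq, if_neg hne]
    refine le_trans (Finset.card_union_le _ _) ?_
    set m := 2^(nu ((e.2.1-e.1)+(e.1-e.2.1))) with hm
    have c1 : (((Finset.range e.2.2).filter (fun t => m ∣ (e.1+t))).image
        (fun t => nu (e.1+t))).card ≤ 14 :=
      le_trans Finset.card_image_le
        (cardFilter e.1 e.2.2 m (Nat.pow_pos (by norm_num)) hbound)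
    have c2 : (((Finset.range e.2.2).filter (fun t => m ∣ (e.2.1+t))).image
        (fun t => nu (e.2.1+t))).card ≤ 14 :=
      le_trans Finset.card_image_le
        (cardFilter e.2.1 e.2.2 m (Nat.pow_pos (by norm_num)) hbound)
    omega
end Lower

section Lower2
variable {n : ℕ} {E : SES Bool}

lemma coverage (hval : E.valid) (hrep : E.represents (tm n)) {v : ℕ} (hv : v ≤ n) :
    v ∈ Bset E := by
  by_contra hvB
  have hsat := hrep.1
  have hEn : E.n = 2^n := by rw [← hsat.1, tm_length]
  set w' : List Bool := (tm n).mapIdx (fun p c => if nu (p+1) = v then !c else c) with hw'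
  have hW : ∀ p : ℕ, w'[p]? = ((tm n)[p]?).map (fun c => if nu (p+1) = v then !c else c) := by
    intro p
    rw [hw']
    simp [List.getElem?_mapIdx]
  have hlen : w'.length = 2^n := by rw [hw']; simp [tm_length]
  have hsat' : E.sat w' := by
    refine ⟨by rw [hlen, hEn], ?_, ?_⟩
    · intro e he
      obtain ⟨hi1, hi1', hl1, hr1, hr2⟩ := hval.1 e he
      rw [dt_iff]
      intro t ht
      have base := (dt_iff (tm n) _ _ _).1 (hsat.2.1 e he) t ht
      rw [hW, hW, base]
      by_cases hne : e.1 = e.2.1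
      · rw [hne]
      · obtain ⟨hdvd, hbound⟩ := eq_bound hval hsat he hne
        set κ := nu ((e.2.1-e.1)+(e.1-e.2.1)) with hκ
        set x := e.1 + t with hx
        set y := e.2.1 + t with hy
        set d := (e.2.1-e.1)+(e.1-e.2.1) with hd
        have hmemx : 2^κ ∣ x → nu x ≠ v := by
          intro hdv hc
          apply hvB
          refine Finset.mem_union_right _ (Finset.mem_biUnion.2 ⟨e, he, ?_⟩)
          rw [Beq, if_neg hne]
          exact Finset.mem_union_left _ (Finset.mem_image.2
            ⟨t, Finset.mem_filter.2 ⟨Finset.mem_range.2 ht, hdv⟩, hc⟩)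
        have hmemy : 2^κ ∣ y → nu y ≠ v := by
          intro hdv hc
          apply hvB
          refine Finset.mem_union_right _ (Finset.mem_biUnion.2 ⟨e, he, ?_⟩)
          rw [Beq, if_neg hne]
          exact Finset.mem_union_right _ (Finset.mem_image.2
            ⟨t, Finset.mem_filter.2 ⟨Finset.mem_range.2 ht, hdv⟩, hc⟩)
        have hflag : (nu x = v ↔ nu y = v) := by
          rcases Nat.lt_or_ge e.1 e.2.1 with h | h
          · have hxy : y = x + d := by omega
            have := flag_iff (x := x) (d := d) (κ := κ) (v := v)
              (by omega) hdvd hmemx (by rw [← hxy]; exact hmemy)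
            rw [hxy]
            exact this
          · have hxy : x = y + d := by omega
            have := flag_iff (x := y) (d := d) (κ := κ) (v := v)
              (by omega) hdvd hmemy (by rw [← hxy]; exact hmemx)
            rw [hxy]
            exact this.symm
        have hx1 : e.1-1+t+1 = x := by omega
        have hy1 : e.2.1-1+t+1 = y := by omega
        rw [hx1, hy1]
        rcases hval2 : (tm n)[e.2.1-1+t]? with _ | c
        · simp
        · simp only [Option.map_some]
          by_cases hfx : nu x = v
          · rw [if_pos hfx, if_pos (hflag.1 hfx)]
          · rw [if_neg hfx, if_neg (fun hc => hfx (hflag.2 hc))]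
    · intro kc hkc
      have hch := hsat.2.2 kc hkc
      obtain ⟨hk1, hk2⟩ := hval.2 kc hkc
      rw [hW, show kc.1-1+1 = kc.1 by omega, hch]
      have hnv : nu kc.1 ≠ v := fun hc =>
        hvB (Finset.mem_union_left _ (Finset.mem_image.2 ⟨kc, hkc, hc⟩))
      simp [hnv]
  have heqtm := hrep.2 w' hsat'
  have h2v : 1 ≤ 2^v := Nat.one_le_two_pow
  have hp : (2^v - 1) < 2^n := by
    have : 2^v ≤ 2^n := Nat.pow_le_pow_right (by norm_num) hv
    omega
  obtain ⟨c, hc⟩ : ∃ c, (tm n)[2^v-1]? = some c :=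
    ⟨_, List.getElem?_eq_getElem (by rw [tm_length]; exact hp)⟩
  have h1 : w'[2^v-1]? = some c := by rw [heqtm]; exact hc
  have h2 : w'[2^v-1]? = some (!c) := by
    rw [hW, hc, show 2^v-1+1 = 2^v by omega]
    simp [nu_pow]
  rw [h1] at h2
  simp at h2

theorem sval_lower (n : ℕ)
    (hne : {k | ∃ E : SES Bool, E.valid ∧ E.represents (tm n) ∧ E.size = k}.Nonempty) :
    n + 1 ≤ 28 * sVal (tm n) := by
  obtain ⟨E, hval, hrep, hsize⟩ := Nat.sInf_mem hne
  have hgoal : n + 1 ≤ 28 * E.size := by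
    have hcov : Finset.range (n+1) ⊆ Bset E := by
      intro v hv
      exact coverage hval hrep (Nat.lt_succ_iff.1 (Finset.mem_range.1 hv))
    have hc1 : (Finset.range (n+1)).card ≤ (Bset E).card := Finset.card_le_card hcov
    rw [Finset.card_range] at hc1
    have hc2 : (Bset E).card ≤ E.Ch.card + 28 * E.Eqs.card := by
      refine le_trans (Finset.card_union_le _ _) ?_
      have h3 : (E.Eqs.biUnion Beq).card ≤ ∑ e ∈ E.Eqs, (Beq e).card := Finset.card_biUnion_le
      have h4 : ∑ e ∈ E.Eqs, (Beq e).card ≤ ∑ _e ∈ E.Eqs, 28 :=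
        Finset.sum_le_sum (fun e he => Beq_card hval hrep.1 he)
      rw [Finset.sum_const, smul_eq_mul] at h4
      have h5 : (E.Ch.image (fun kc => nu kc.1)).card ≤ E.Ch.card := Finset.card_image_le
      omega
    have : E.size = E.Eqs.card + E.Ch.card := rfl
    omega
  calc n + 1 ≤ 28 * E.size := hgoal
  _ = 28 * sVal (tm n) := by rw [hsize]; rfl

end Lower2


theorem stmt7 : ∃ c₁ c₂ : ℝ, 0 < c₁ ∧ 0 < c₂ ∧ ∃ N : ℕ, ∀ n ≥ N,
    c₁ * n ≤ (sVal (tm n) : ℝ) ∧ (sVal (tm n) : ℝ) ≤ c₂ * n := by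
  refine ⟨1/28, 2, by norm_num, by norm_num, 2, ?_⟩
  intro n hn
  have hnemp : {k | ∃ E : SES Bool, E.valid ∧ E.represents (tm n) ∧ E.size = k}.Nonempty :=
    ⟨(EU n).size, EU n, EU_valid n hn, EU_represents n hn, rfl⟩
  have hlow := sval_lower n hnemp
  have hup := sval_upper n hn
  constructor
  · rw [div_mul_eq_mul_div, div_le_iff₀ (by norm_num : (0:ℝ) < 28)]
    have h1 : (n : ℝ) ≤ 28 * (sVal (tm n) : ℝ) := by
      exact_mod_cast (by omega : n ≤ 28 * sVal (tm n))
    linarith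
  · have h2 : (sVal (tm n) : ℝ) ≤ ((2 * n : ℕ) : ℝ) := by exact_mod_cast hup
    push_cast at h2
    linarith
end

section
/- For the Thue–Morse words t_n, γ(t_n) = o(s(t_n)) as n → ∞; in particular γ(t_n) ≤ 4 for all n while s(t_n) → ∞. -/
/-!
Attractors: every factor of length at least two of `t₃` has an occurrence straddling one of the
cuts after positions `2, 4, 5, 6`, and all four two-letter words straddle such a cut. This
property passes from `w` to `μ w` with doubled cuts, because a factor of `μ w` is read off a factor
of `w` of half the length, occurring wherever that one does.

Equation systems: in a system representing a binary word every position is tied by equations to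
a character constraint, for otherwise flipping its whole class gives a second solution. In `t_n`
an equation of length at least `5 · 2 ^ k` only ties positions congruent modulo `2 ^ k`. A system
of size `K` has a scale `b ^ j` with `b = 2 ^ (K + 4)` at which no equation length lies in
`[5 b ^ j, 5 b ^ (j + 1))`; the short equations and the character constraints then reach fewer
than `b ^ (j + 1)` residues, so `2 ^ n < b ^ (j + 1)`.
-/

section Windows
variable {α : Type*}

lemma take_drop_eq_take_drop_iff {l l' : List α} {a b n : ℕ} :
    (l.drop a).take n = (l'.drop b).take n ↔ ∀ t < n, l[a + t]? = l'[b + t]? := by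
  constructor
  · intro h t ht
    simpa [List.getElem?_take_of_lt ht] using congrArg (·[t]?) h
  · intro h
    refine List.ext_getElem? fun t => ?_
    by_cases ht : t < n
    · simpa [List.getElem?_take_of_lt ht] using h t ht
    · simp [ht]

lemma occursAt_add_one_iff {w u : List α} {a : ℕ} :
    occursAt w u (a + 1) ↔ a + u.length ≤ w.length ∧ ∀ t < u.length, w[a + t]? = u[t]? := by
  have hself : (w.drop a).take u.length = u ↔ (w.drop a).take u.length = (u.drop 0).take u.length := by
    simp
  rw [occursAt, Nat.add_sub_cancel, hself, take_drop_eq_take_drop_iff]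
  simp only [zero_add]
  exact ⟨fun ⟨_, hle, h⟩ => ⟨by omega, h⟩, fun ⟨hle, h⟩ => ⟨by omega, by omega, h⟩⟩

lemma exists_window_of_infix {w u : List α} (h : u <:+: w) :
    ∃ s, s + u.length ≤ w.length ∧ ∀ t < u.length, w[s + t]? = u[t]? := by
  obtain ⟨s, hs, hget⟩ := List.infix_iff_getElem?.1 h
  exact ⟨s, by omega, fun t ht => by rw [add_comm, hget t ht, List.getElem?_eq_getElem]⟩

lemma gammaVal_le_card {w : List α} {Γ : Finset ℕ} (h : IsAttractor w Γ) : gammaVal w ≤ Γ.card :=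
  Nat.sInf_le ⟨Γ, h, rfl⟩

lemma gammaVal_le_length (w : List α) : gammaVal w ≤ w.length := by
  refine (gammaVal_le_card (Γ := Finset.Icc 1 w.length) ⟨fun p hp => Finset.mem_Icc.1 hp, ?_⟩).trans
    (by simp)
  intro u hu hinf
  obtain ⟨s, hs, hget⟩ := exists_window_of_infix hinf
  have hlen := List.length_pos_iff.2 hu
  exact ⟨s + 1, occursAt_add_one_iff.2 ⟨hs, hget⟩, s + 1, Finset.mem_Icc.2 ⟨by omega, by omega⟩,
    le_rfl, by omega⟩

end Windows

def thueMorseMap (w : List Bool) : List Bool := w.flatMap fun b => [b, !b]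

lemma tm_succ_s8 (n : ℕ) : tm (n + 1) = thueMorseMap (tm n) := rfl

lemma length_thueMorseMap (w : List Bool) : (thueMorseMap w).length = 2 * w.length := by
  induction w with
  | nil => rfl
  | cons b w ih => simp only [thueMorseMap, List.flatMap_cons] at ih ⊢; simp [ih]; ring

lemma getElem?_thueMorseMap_two_mul (w : List Bool) (q : ℕ) :
    (thueMorseMap w)[2 * q]? = w[q]? := by
  induction w generalizing q with
  | nil => simp [thueMorseMap]
  | cons b w ih =>
    cases q with
    | zero => simp [thueMorseMap]
    | succ q => simpa [thueMorseMap, Nat.mul_succ] using ih q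

lemma getElem?_thueMorseMap_two_mul_add_one (w : List Bool) (q : ℕ) :
    (thueMorseMap w)[2 * q + 1]? = w[q]?.map (!·) := by
  induction w generalizing q with
  | nil => simp [thueMorseMap]
  | cons b w ih =>
    cases q with
    | zero => simp [thueMorseMap]
    | succ q => simpa [thueMorseMap, Nat.mul_succ] using ih q

lemma thueMorseMap_agree {w : List Bool} {a b h : ℕ} (hab : ∀ t < h, w[a + t]? = w[b + t]?) :
    ∀ t < 2 * h, (thueMorseMap w)[2 * a + t]? = (thueMorseMap w)[2 * b + t]? := by
  intro t ht
  obtain ⟨q, rfl | rfl⟩ := Nat.even_or_odd' t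
  · rw [← mul_add, ← mul_add, getElem?_thueMorseMap_two_mul, getElem?_thueMorseMap_two_mul,
      hab q (by omega)]
  · rw [← add_assoc, ← mul_add, ← add_assoc, ← mul_add, getElem?_thueMorseMap_two_mul_add_one,
      getElem?_thueMorseMap_two_mul_add_one, hab q (by omega)]

/-- `p ∈ Γ` marks the cut between the 1-indexed positions `p` and `p + 1`, i.e. between `w[p - 1]`
and `w[p]`. The quantifiers are bounded to make the property decidable. -/
def IsCutAttractor (w : List Bool) (Γ : Finset ℕ) : Prop :=
  (∀ p ∈ Γ, 1 ≤ p ∧ p < w.length) ∧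
  (∀ x y : Bool, ∃ p ∈ Γ, w[p - 1]? = some x ∧ w[p]? = some y) ∧
  ∀ s < w.length, ∀ m ≤ w.length, 2 ≤ m → s + m ≤ w.length →
    ∃ a < w.length, a + m ≤ w.length ∧ (∀ t < m, w[a + t]? = w[s + t]?) ∧
      ∃ p ∈ Γ, a < p ∧ p < a + m

namespace IsCutAttractor

variable {w : List Bool} {Γ : Finset ℕ}

lemma isAttractor (h : IsCutAttractor w Γ) : IsAttractor w Γ := by
  obtain ⟨hΓ, hpair, hwin⟩ := h
  refine ⟨fun p hp => ⟨(hΓ p hp).1, (hΓ p hp).2.le⟩, fun u hu hinf => ?_⟩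
  obtain ⟨s, hs, hget⟩ := exists_window_of_infix hinf
  by_cases hlen : u.length = 1
  · obtain ⟨c, rfl⟩ := List.length_eq_one_iff.1 hlen
    obtain ⟨p, hp, hc, -⟩ := hpair c true
    have := hΓ p hp
    refine ⟨p - 1 + 1, occursAt_add_one_iff.2 ⟨by simp; omega, ?_⟩, p, hp, by omega, by simp; omega⟩
    simpa using hc
  · obtain ⟨a, -, ha, hagree, p, hp, hap, hpa⟩ :=
      hwin s (by have := List.length_pos_iff.2 hu; omega) u.length (by omega)
        (by have := List.length_pos_iff.2 hu; omega) hs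
    exact ⟨a + 1, occursAt_add_one_iff.2 ⟨ha, fun t ht => (hagree t ht).trans (hget t ht)⟩,
      p, hp, by omega, by omega⟩

lemma thueMorseMap (h : IsCutAttractor w Γ) :
    IsCutAttractor (_root_.thueMorseMap w) (Γ.image (2 * ·)) := by
  obtain ⟨hΓ, hpair, hwin⟩ := h
  have hpair' : ∀ x y : Bool, ∃ p ∈ Γ, (_root_.thueMorseMap w)[2 * p - 1]? = some x ∧
      (_root_.thueMorseMap w)[2 * p]? = some y := by
    intro x y
    obtain ⟨p, hp, hx, hy⟩ := hpair (!x) y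
    have := hΓ p hp
    refine ⟨p, hp, ?_, by rw [getElem?_thueMorseMap_two_mul, hy]⟩
    rw [show 2 * p - 1 = 2 * (p - 1) + 1 by omega, getElem?_thueMorseMap_two_mul_add_one, hx]
    simp
  simp only [IsCutAttractor, length_thueMorseMap, Finset.mem_image, forall_exists_index, and_imp,
    forall_apply_eq_imp_iff₂, exists_exists_and_eq_and]
  refine ⟨fun p hp => by have := hΓ p hp; omega, hpair', ?_⟩
  intro s hs m hm hm2 hsm
  by_cases hm2' : m = 2
  · subst hm2'
    have hlen := length_thueMorseMap w
    obtain ⟨p, hp, hx, hy⟩ := hpair' ((_root_.thueMorseMap w)[s]'(by omega))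
      ((_root_.thueMorseMap w)[s + 1]'(by omega))
    have := hΓ p hp
    refine ⟨2 * p - 1, by omega, by omega, fun t ht => ?_, p, hp, by omega, by omega⟩
    interval_cases t
    · simp [hx]
    · simp [show 2 * p - 1 + 1 = 2 * p by omega, hy]
  · obtain ⟨A, r, hr, rfl⟩ : ∃ A r, r < 2 ∧ s = 2 * A + r := ⟨s / 2, s % 2, by omega, by omega⟩
    -- the factor at `2 * A + r` of length `m` is read off the one at `A` of length `⌈(m + r) / 2⌉`
    obtain ⟨a, ha, ham, hagree, p, hp, hap, hpa⟩ :=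
      hwin A (by omega) ((m + r + 1) / 2) (by omega) (by omega) (by omega)
    refine ⟨2 * a + r, by omega, by omega, fun t ht => ?_, p, hp, by omega, by omega⟩
    simpa only [add_assoc] using thueMorseMap_agree hagree (r + t) (by omega)

end IsCutAttractor

set_option synthInstance.maxSize 2000 in
lemma isCutAttractor_tm_three : IsCutAttractor (tm 3) {2, 4, 5, 6} := by
  unfold IsCutAttractor; decide

lemma exists_isCutAttractor_tm (k : ℕ) : ∃ Γ, IsCutAttractor (tm (k + 3)) Γ ∧ Γ.card ≤ 4 := by
  induction k with
  | zero => exact ⟨_, isCutAttractor_tm_three, by decide⟩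
  | succ k ih =>
    obtain ⟨Γ, hΓ, hcard⟩ := ih
    exact ⟨_, hΓ.thueMorseMap, Finset.card_image_le.trans hcard⟩

lemma gammaVal_tm_le_four (n : ℕ) : gammaVal (tm n) ≤ 4 := by
  rcases Nat.lt_or_ge n 3 with hn | hn
  · have hlen : (tm n).length ≤ 4 := by interval_cases n <;> decide
    exact (gammaVal_le_length _).trans hlen
  · obtain ⟨k, rfl⟩ := Nat.exists_eq_add_of_le' hn
    obtain ⟨Γ, hΓ, hcard⟩ := exists_isCutAttractor_tm k
    exact (gammaVal_le_card hΓ.isAttractor).trans hcard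

def thueMorse : ℕ → Bool
  | 0 => false
  | x + 1 => xor ((x + 1) % 2 == 1) (thueMorse ((x + 1) / 2))

lemma thueMorse_two_mul (x : ℕ) : thueMorse (2 * x) = thueMorse x := by
  cases x with
  | zero => rfl
  | succ x =>
    rw [show 2 * (x + 1) = (2 * x + 1) + 1 by ring, thueMorse]
    simp [show (2 * x + 1 + 1) % 2 = 0 by omega, show (2 * x + 1 + 1) / 2 = x + 1 by omega]

lemma thueMorse_two_mul_add_one (x : ℕ) : thueMorse (2 * x + 1) = !thueMorse x := by
  rw [thueMorse]
  simp [show (2 * x + 1) % 2 = 1 by omega, show (2 * x + 1) / 2 = x by omega]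

lemma getElem?_tm {n x : ℕ} (hx : x < 2 ^ n) : (tm n)[x]? = some (thueMorse x) := by
  induction n generalizing x with
  | zero =>
    obtain rfl : x = 0 := by simpa using hx
    simp [tm, thueMorse]
  | succ n ih =>
    rw [tm_succ_s8]
    obtain ⟨q, rfl | rfl⟩ := Nat.even_or_odd' x
    · rw [getElem?_thueMorseMap_two_mul, ih (by omega), thueMorse_two_mul]
    · rw [getElem?_thueMorseMap_two_mul_add_one, ih (by omega), thueMorse_two_mul_add_one]
      rfl

lemma length_tm (n : ℕ) : (tm n).length = 2 ^ n := by
  induction n with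
  | zero => rfl
  | succ n ih => rw [tm_succ_s8, length_thueMorseMap, ih, pow_succ, mul_comm]

lemma thueMorse_not_cube (y : ℕ) :
    ¬ (thueMorse y = thueMorse (y + 1) ∧ thueMorse (y + 1) = thueMorse (y + 2)) := by
  obtain ⟨k, rfl | rfl⟩ := Nat.even_or_odd' y
  · simp [thueMorse_two_mul, thueMorse_two_mul_add_one]
  · rw [show 2 * k + 1 + 1 = 2 * (k + 1) by ring, show 2 * k + 1 + 2 = 2 * (k + 1) + 1 by ring]
    simp [thueMorse_two_mul, thueMorse_two_mul_add_one]

/-- Since aligned pairs are `ab` or `ba`, an alternating factor `ababa` would force a cube in the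
half-sequence. -/
lemma thueMorse_not_alternating (c : ℕ) :
    ¬ ∀ i < 4, thueMorse (c + i + 1) = !thueMorse (c + i) := by
  intro h
  obtain ⟨k, rfl | rfl⟩ := Nat.even_or_odd' c
  · apply thueMorse_not_cube k
    have h1 := h 1 (by norm_num)
    have h3 := h 3 (by norm_num)
    rw [show 2 * k + 1 + 1 = 2 * (k + 1) by ring, thueMorse_two_mul, thueMorse_two_mul_add_one,
      Bool.not_not] at h1
    rw [show 2 * k + 3 + 1 = 2 * (k + 2) by ring, show 2 * k + 3 = 2 * (k + 1) + 1 by ring,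
      thueMorse_two_mul, thueMorse_two_mul_add_one, Bool.not_not] at h3
    exact ⟨h1.symm, h3.symm⟩
  · apply thueMorse_not_cube k
    have h0 := h 0 (by norm_num)
    have h2 := h 2 (by norm_num)
    rw [show 2 * k + 1 + 0 + 1 = 2 * (k + 1) by ring, add_zero, thueMorse_two_mul,
      thueMorse_two_mul_add_one, Bool.not_not] at h0
    rw [show 2 * k + 1 + 2 + 1 = 2 * (k + 2) by ring, show 2 * k + 1 + 2 = 2 * (k + 1) + 1 by ring,
      thueMorse_two_mul, thueMorse_two_mul_add_one, Bool.not_not] at h2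
    exact ⟨h0.symm, h2.symm⟩

lemma thueMorse_succ_of_even {c : ℕ} (hc : Even c) : thueMorse (c + 1) = !thueMorse c := by
  obtain ⟨k, rfl⟩ := hc
  rw [← two_mul, thueMorse_two_mul_add_one, thueMorse_two_mul]

/-- Every factor of length five fixes the parity of its position: at an even position the aligned
pairs start at offsets `0, 2`, at an odd one at offsets `1, 3`, and together they would make the
factor alternating. -/
lemma thueMorse_mod_two_eq {a b : ℕ} (h : ∀ x < 5, thueMorse (a + x) = thueMorse (b + x)) :
    a % 2 = b % 2 := by
  by_contra hne
  apply thueMorse_not_alternating a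
  intro i hi
  rcases Nat.even_or_odd (a + i) with ha | ha
  · exact thueMorse_succ_of_even ha
  · have hb : Even (b + i) := by
      rw [Nat.odd_iff] at ha
      rw [Nat.even_iff]
      omega
    rw [add_assoc, h (i + 1) (by omega), h i (by omega), ← add_assoc]
    exact thueMorse_succ_of_even hb

lemma thueMorse_modEq_of_agree (k : ℕ) {a b : ℕ}
    (h : ∀ x < 5 * 2 ^ k, thueMorse (a + x) = thueMorse (b + x)) : a ≡ b [MOD 2 ^ k] := by
  induction k generalizing a b with
  | zero => exact Nat.modEq_one
  | succ k ih =>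
    have hpar := thueMorse_mod_two_eq fun x hx =>
      h x (by have := Nat.two_pow_pos k; rw [pow_succ]; omega)
    obtain ⟨a', r, hr, rfl⟩ : ∃ a' r, r < 2 ∧ a = 2 * a' + r := ⟨a / 2, a % 2, by omega, by omega⟩
    obtain ⟨b', rfl⟩ : ∃ b', b = 2 * b' + r := ⟨b / 2, by omega⟩
    have hhalf : a' ≡ b' [MOD 2 ^ k] := ih fun x hx => by
      have := h (2 * x) (by rw [pow_succ]; omega)
      rw [show 2 * a' + r + 2 * x = 2 * (a' + x) + r by ring,
        show 2 * b' + r + 2 * x = 2 * (b' + x) + r by ring] at this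
      interval_cases r <;> simpa [thueMorse_two_mul, thueMorse_two_mul_add_one] using this
    rw [pow_succ']
    exact (hhalf.mul_left' 2).add_right r

open Relation in
lemma eqvGen_or_exists_of_forall_or_mem {α : Type*} {r s : α → α → Prop} {A : Set α}
    (h : ∀ x y, r x y → s x y ∨ x ∈ A ∧ y ∈ A) {x y : α} (hxy : EqvGen r x y) :
    EqvGen s x y ∨ (∃ a ∈ A, EqvGen s x a) ∧ ∃ a ∈ A, EqvGen s y a := by
  induction hxy with
  | rel x y hr =>
    rcases h x y hr with hs | ⟨hx, hy⟩
    · exact .inl (.rel _ _ hs)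
    · exact .inr ⟨⟨x, hx, .refl x⟩, ⟨y, hy, .refl y⟩⟩
  | refl x => exact .inl (.refl x)
  | symm x y _ ih => exact ih.imp (EqvGen.symm _ _) And.symm
  | trans x y z _ _ ih₁ ih₂ =>
    rcases ih₁ with h₁ | ⟨hx, ⟨a, ha, hya⟩⟩ <;> rcases ih₂ with h₂ | ⟨⟨a', ha', hya'⟩, hz⟩
    · exact .inl (h₁.trans _ _ _ h₂)
    · exact .inr ⟨⟨a', ha', h₁.trans _ _ _ hya'⟩, hz⟩
    · exact .inr ⟨hx, ⟨a, ha, (h₂.symm _ _).trans _ _ _ hya⟩⟩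
    · exact .inr ⟨hx, hz⟩

lemma le_card_of_forall_modEq {S : Finset ℕ} {m N : ℕ} (hm : 0 < m) (hmN : m ≤ N)
    (h : ∀ p, 1 ≤ p → p ≤ N → ∃ q ∈ S, p ≡ q [MOD m]) : m ≤ S.card := by
  have hsub : Finset.range m ⊆ S.image (· % m) := by
    intro r hr
    rw [Finset.mem_range] at hr
    obtain ⟨q, hq, hpq⟩ := h (if r = 0 then m else r) (by split_ifs <;> omega)
      (by split_ifs <;> omega)
    refine Finset.mem_image.2 ⟨q, hq, ?_⟩
    rw [← hpq]
    split_ifs with hr0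
    · simp [hr0]
    · exact Nat.mod_eq_of_lt hr
  simpa using (Finset.card_le_card hsub).trans Finset.card_image_le

lemma exists_le_card_forall_lt_or_le (s : Finset ℕ) (b : ℕ) :
    ∃ j ≤ s.card, ∀ x ∈ s, x < b ^ j ∨ b ^ (j + 1) ≤ x := by
  obtain ⟨j, hj, hjs⟩ := Finset.exists_mem_notMem_of_card_lt_card
    (s := s.image (Nat.log b)) (t := Finset.range (s.card + 1))
    (by simpa using Finset.card_image_le.trans_lt (Nat.lt_succ_self _))
  refine ⟨j, Nat.lt_succ_iff.1 (Finset.mem_range.1 hj), fun x hx => ?_⟩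
  by_contra! hxj
  exact hjs (Finset.mem_image.2 ⟨x, hx, Nat.log_eq_of_pow_le_of_lt_pow hxj.1 hxj.2⟩)

namespace SES

variable {α : Type*} (E : SES α)

/-- The 1-indexed positions `p` and `q` are identified by an equation of length at least `θ`. -/
def Linked (θ p q : ℕ) : Prop :=
  ∃ e ∈ E.Eqs, θ ≤ e.2.2 ∧ ∃ t < e.2.2, p = e.1 + t ∧ q = e.2.1 + t

def chPositions : Finset ℕ := E.Ch.image Prod.fst

def shortSpan (θ : ℕ) : Finset ℕ :=
  (E.Eqs.filter (·.2.2 < θ)).biUnion fun e =>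
    (Finset.range e.2.2).image (e.1 + ·) ∪ (Finset.range e.2.2).image (e.2.1 + ·)

variable {E}

lemma linked_or_mem_shortSpan {θ p q : ℕ} (h : E.Linked 0 p q) :
    E.Linked θ p q ∨ p ∈ E.shortSpan θ ∧ q ∈ E.shortSpan θ := by
  obtain ⟨e, he, -, t, ht, rfl, rfl⟩ := h
  by_cases hθ : θ ≤ e.2.2
  · exact .inl ⟨e, he, hθ, t, ht, rfl, rfl⟩
  · refine .inr ⟨?_, ?_⟩ <;> refine Finset.mem_biUnion.2 ⟨e, Finset.mem_filter.2 ⟨he, by omega⟩, ?_⟩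
    · exact Finset.mem_union_left _ (Finset.mem_image_of_mem _ (Finset.mem_range.2 ht))
    · exact Finset.mem_union_right _ (Finset.mem_image_of_mem _ (Finset.mem_range.2 ht))

lemma card_shortSpan_le {θ B : ℕ} (hB : ∀ e ∈ E.Eqs, e.2.2 < θ → e.2.2 ≤ B) :
    (E.shortSpan θ).card ≤ 2 * B * E.Eqs.card := by
  refine Finset.card_biUnion_le.trans ((Finset.sum_le_card_nsmul _ _ (2 * B) ?_).trans ?_)
  · intro e he
    obtain ⟨he, hlt⟩ := Finset.mem_filter.1 he
    refine (Finset.card_union_le _ _).trans ?_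
    have h₁ := Finset.card_image_le (s := Finset.range e.2.2) (f := (e.1 + ·))
    have h₂ := Finset.card_image_le (s := Finset.range e.2.2) (f := (e.2.1 + ·))
    have := hB e he hlt
    simp only [Finset.card_range] at h₁ h₂
    omega
  · rw [smul_eq_mul, mul_comm]
    exact Nat.mul_le_mul_left _ (Finset.card_filter_le _ _)

variable {E : SES Bool}

/-- Flipping the letters of a whole class of `EqvGen (E.Linked 0)` preserves every equation, so a
class without a character constraint contradicts uniqueness of the solution. -/
lemma exists_mem_chPositions_eqvGen {w : List Bool} (hv : E.valid) (hw : E.represents w)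
    {p : ℕ} (hp : 1 ≤ p) (hpw : p ≤ w.length) :
    ∃ q ∈ E.chPositions, Relation.EqvGen (E.Linked 0) p q := by
  classical
  by_contra! hno
  let flip : ℕ → Bool → Bool := fun i b => if Relation.EqvGen (E.Linked 0) (i + 1) p then !b else b
  have hsat : E.sat (w.mapIdx flip) := by
    refine ⟨by simpa using hw.1.1, fun e he => ?_, fun kc hkc => ?_⟩
    · obtain ⟨h₁, h₂, -, -, -⟩ := hv.1 e he
      have hagree := take_drop_eq_take_drop_iff.1 (hw.1.2.1 e he)
      refine take_drop_eq_take_drop_iff.2 fun t ht => ?_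
      have hlink : Relation.EqvGen (E.Linked 0) (e.1 + t) (e.2.1 + t) :=
        .rel _ _ ⟨e, he, Nat.zero_le _, t, ht, rfl, rfl⟩
      have hiff : Relation.EqvGen (E.Linked 0) (e.1 + t) p ↔
          Relation.EqvGen (E.Linked 0) (e.2.1 + t) p :=
        ⟨fun h => (hlink.symm _ _).trans _ _ _ h, fun h => hlink.trans _ _ _ h⟩
      simp only [List.getElem?_mapIdx, hagree t ht, flip, show e.1 - 1 + t + 1 = e.1 + t by omega,
        show e.2.1 - 1 + t + 1 = e.2.1 + t by omega, hiff]
    · have hk := (hv.2 kc hkc).1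
      have hflag : ¬ Relation.EqvGen (E.Linked 0) (kc.1 - 1 + 1) p := fun h =>
        hno kc.1 (Finset.mem_image_of_mem _ hkc)
          (by rw [Nat.sub_add_cancel hk] at h; exact h.symm _ _)
      simp [flip, hflag, hw.1.2.2 kc hkc]
  have := congrArg (·[p - 1]?) (hw.2 _ hsat)
  simp [flip, Nat.sub_add_cancel hp, Relation.EqvGen.refl,
    List.getElem?_eq_getElem (by omega : p - 1 < w.length)] at this

lemma exists_mem_eqvGen_linked {w : List Bool} (hv : E.valid) (hw : E.represents w) (θ : ℕ)
    {p : ℕ} (hp : 1 ≤ p) (hpw : p ≤ w.length) :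
    ∃ q ∈ E.chPositions ∪ E.shortSpan θ, Relation.EqvGen (E.Linked θ) p q := by
  obtain ⟨q, hq, hpq⟩ := exists_mem_chPositions_eqvGen hv hw hp hpw
  rcases eqvGen_or_exists_of_forall_or_mem (A := E.shortSpan θ)
    (fun _ _ => linked_or_mem_shortSpan) hpq with h | ⟨⟨a, ha, hpa⟩, -⟩
  · exact ⟨q, Finset.mem_union_left _ hq, h⟩
  · exact ⟨a, Finset.mem_union_right _ ha, hpa⟩

lemma modEq_of_linked {n k : ℕ} (hv : E.valid) (hw : E.sat (tm n)) {p q : ℕ}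
    (h : E.Linked (5 * 2 ^ k) p q) : p ≡ q [MOD 2 ^ k] := by
  obtain ⟨e, he, hθ, t, ht, rfl, rfl⟩ := h
  obtain ⟨h₁, h₂, -, hi, hj⟩ := hv.1 e he
  have hn : E.n = 2 ^ n := by rw [← hw.1, length_tm]
  have hagree : ∀ x < 5 * 2 ^ k, thueMorse (e.1 - 1 + x) = thueMorse (e.2.1 - 1 + x) := by
    intro x hx
    have := take_drop_eq_take_drop_iff.1 (hw.2.1 e he) x (by omega)
    rwa [getElem?_tm (n := n) (by omega), getElem?_tm (n := n) (by omega), Option.some_inj] at this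
  have := (thueMorse_modEq_of_agree k hagree).add_right (t + 1)
  rwa [show e.1 - 1 + (t + 1) = e.1 + t by omega, show e.2.1 - 1 + (t + 1) = e.2.1 + t by omega]
    at this

lemma modEq_of_eqvGen_linked {n k : ℕ} (hv : E.valid) (hw : E.sat (tm n)) {p q : ℕ}
    (h : Relation.EqvGen (E.Linked (5 * 2 ^ k)) p q) : p ≡ q [MOD 2 ^ k] :=
  (Equivalence.eqvGen_iff ⟨Nat.ModEq.refl, Nat.ModEq.symm, Nat.ModEq.trans⟩).1
    (Relation.EqvGen.mono (fun _ _ => modEq_of_linked hv hw) _ _ h)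

lemma two_pow_le_card_of_represents_tm {n k : ℕ} (hv : E.valid) (hr : E.represents (tm n))
    (hk : k ≤ n) : 2 ^ k ≤ (E.chPositions ∪ E.shortSpan (5 * 2 ^ k)).card := by
  refine le_card_of_forall_modEq (Nat.two_pow_pos k) (Nat.pow_le_pow_right two_pos hk)
    fun p hp hpn => ?_
  obtain ⟨q, hq, hpq⟩ := exists_mem_eqvGen_linked hv hr _ hp (by rwa [length_tm])
  exact ⟨q, hq, modEq_of_eqvGen_linked hv hr.1 hpq⟩

theorem lt_of_represents_tm {n : ℕ} (hv : E.valid) (hr : E.represents (tm n)) :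
    n < (E.size + 1) * (E.size + 4) := by
  set K := E.size
  set b := 2 ^ (K + 4) with hb_def
  -- `11 * K < b` is what makes `K + 10 * K * b ^ j < b ^ (j + 1)` below.
  have hb : 11 * K < b := by
    have := Nat.lt_two_pow_self (n := K)
    have hb16 : b = 2 ^ K * 16 := show 2 ^ (K + 4) = _ by rw [pow_add]; rfl
    omega
  have heK : E.Eqs.card ≤ K := Nat.le_add_right _ _
  have hcK : E.Ch.card ≤ K := Nat.le_add_left _ _
  obtain ⟨j, hj, hgap⟩ := exists_le_card_forall_lt_or_le (E.Eqs.image (·.2.2 / 5)) b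
  have hjK : j ≤ K := hj.trans (Finset.card_image_le.trans heK)
  by_contra! hn
  have hcount := two_pow_le_card_of_represents_tm hv hr (k := (K + 4) * (j + 1)) (by nlinarith)
  rw [pow_mul, ← hb_def] at hcount
  have hshort : ∀ e ∈ E.Eqs, e.2.2 < 5 * b ^ (j + 1) → e.2.2 ≤ 5 * b ^ j := by
    intro e he hlt
    have := hgap _ (Finset.mem_image_of_mem _ he)
    omega
  have hcard : (E.chPositions ∪ E.shortSpan (5 * b ^ (j + 1))).card ≤ K + 2 * (5 * b ^ j) * K :=
    (Finset.card_union_le _ _).trans (add_le_add (Finset.card_image_le.trans hcK)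
      ((card_shortSpan_le hshort).trans (Nat.mul_le_mul_left _ heK)))
  have hbj : 1 ≤ b ^ j := Nat.one_le_pow _ _ (by positivity)
  have h₁ : b ^ j * (11 * K + 1) ≤ b ^ j * b := Nat.mul_le_mul_left _ hb
  have h₂ : K * 1 ≤ K * b ^ j := Nat.mul_le_mul_left _ hbj
  have := hcount.trans hcard
  rw [pow_succ] at this
  nlinarith

lemma exists_represents {α : Type*} (w : List α) : ∃ E : SES α, E.valid ∧ E.represents w := by
  classical
  refine ⟨⟨w.length, ∅, Finset.univ.image fun i : Fin w.length => (i.1 + 1, w[i])⟩, ⟨by simp, ?_⟩,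
    ⟨rfl, by simp, ?_⟩, fun w' hw' => List.ext_getElem? fun i => ?_⟩
  · simp only [Finset.mem_image, Finset.mem_univ, true_and, forall_exists_index]
    rintro _ i rfl
    omega
  · simp
  · by_cases hi : i < w.length
    · simpa [List.getElem?_eq_getElem hi] using
        hw'.2.2 (i + 1, w[i]) (Finset.mem_image.2 ⟨⟨i, hi⟩, Finset.mem_univ _, rfl⟩)
    · rw [List.getElem?_eq_none (by have := hw'.1; simp_all), List.getElem?_eq_none (by omega)]

lemma exists_size_eq_sVal {α : Type*} (w : List α) :
    ∃ E : SES α, E.valid ∧ E.represents w ∧ E.size = sVal w := by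
  obtain ⟨E, hv, hr⟩ := exists_represents w
  exact Nat.sInf_mem (s := {k | ∃ E : SES α, E.valid ∧ E.represents w ∧ E.size = k})
    ⟨_, E, hv, hr, rfl⟩

end SES

lemma tendsto_sVal_tm : Filter.Tendsto (fun n => sVal (tm n)) Filter.atTop Filter.atTop := by
  refine Filter.tendsto_atTop_atTop.2 fun K => ⟨(K + 1) * (K + 4), fun n hn => ?_⟩
  obtain ⟨E, hv, hr, hE⟩ := SES.exists_size_eq_sVal (tm n)
  have := SES.lt_of_represents_tm hv hr
  by_contra! hlt
  rw [hE] at this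
  nlinarith

theorem stmt8 :
    (∀ n, gammaVal (tm n) ≤ 4) ∧
    Filter.Tendsto (fun n => sVal (tm n)) Filter.atTop Filter.atTop ∧
    Filter.Tendsto (fun n => (gammaVal (tm n) : ℝ) / (sVal (tm n) : ℝ))
      Filter.atTop (nhds 0) := by
  refine ⟨gammaVal_tm_le_four, tendsto_sVal_tm, ?_⟩
  have hbound : Filter.Tendsto (fun n => (4 : ℝ) / sVal (tm n)) Filter.atTop (nhds 0) :=
    tendsto_const_nhds.div_atTop (tendsto_natCast_atTop_atTop.comp tendsto_sVal_tm)
  refine squeeze_zero (fun n => by positivity) (fun n => ?_) hbound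
  exact div_le_div_of_nonneg_right (by exact_mod_cast gammaVal_tm_le_four n) (Nat.cast_nonneg _)
end

section
/- Let w be a string with unique terminator, and define the relation ≡_χ on positions of w as the equivalence closure of: for any two super-maximal right extensions yxc and zxc' (c,c' characters, x the longest common suffix of yx and zx, x nonempty), with w[i..i+|x|-1] the occurrence of x inside the leftmost occurrence of yxc and w[i'..i'+|x|-1] the occurrence of x inside the leftmost occurrence of zxc', we set i+k ≡_χ i'+k for all 0 ≤ k < |x|. Then for any repeating substring u of w (a substring with at least two occurrences) and any two occurrences u = w[i..i+|u|-1] = w[i'..i'+|u|-1], we have i+k ≡_χ i'+k for all 0 ≤ k < |u|. -/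
/-!
Induct on `|w| - |u|`. A nonempty `u` with two distinct occurrences cannot occur at the end of
`w`, because the terminator occurs only once; so both occurrences extend by a character, to `uc`
and `uc'`. If `c = c'`, the two occurrences of `uc` are identified by induction. Otherwise `uc`
and `uc'` are right extensions, contained in super-maximal ones `yuc` and `y'uc'`; splitting off
the longest common suffix of `y` and `y'` puts them in the shape of a generating pair, which links
the copies of `u` inside their leftmost occurrences. By induction, each given occurrence of `uc`
(resp. `uc'`) is identified with the copy inside the leftmost occurrence of `yuc` (resp. `y'uc'`).
-/

section
variable {α : Type*} {w u v y : List α} {i i' : ℕ}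

theorem occursAt_iff : occursAt w u i ↔ ∃ s t, w = s ++ u ++ t ∧ i = s.length + 1 := by
  constructor
  · rintro ⟨hi, hlen, htake⟩
    refine ⟨w.take (i - 1), w.drop (i - 1 + u.length), ?_, by simp; omega⟩
    have hsplit := List.take_append_drop u.length (w.drop (i - 1))
    rw [htake] at hsplit
    rw [List.append_assoc, ← List.drop_drop, hsplit, List.take_append_drop]
  · rintro ⟨s, t, rfl, rfl⟩
    exact ⟨by omega, by simp; omega, by simp⟩

theorem occursAt.right_of_append (h : occursAt w (y ++ v) i) : occursAt w v (i + y.length) := by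
  obtain ⟨s, t, rfl, rfl⟩ := occursAt_iff.1 h
  exact occursAt_iff.2 ⟨s ++ y, t, by simp, by simp; omega⟩

theorem occursAt.infix (h : occursAt w u i) : u <:+: w := by
  obtain ⟨s, t, rfl, -⟩ := occursAt_iff.1 h
  exact ⟨s, t, rfl⟩

theorem exists_leftmostOcc (h : u <:+: w) : ∃ i, leftmostOcc w u i := by
  classical
  obtain ⟨s, t, hw⟩ := h
  have hocc : ∃ i, occursAt w u i := ⟨s.length + 1, occursAt_iff.2 ⟨s, t, hw.symm, rfl⟩⟩
  exact ⟨Nat.find hocc, Nat.find_spec hocc, fun _ => Nat.find_min' hocc⟩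

theorem RightExt.infix (h : RightExt w u) : u <:+: w := by
  obtain ⟨x, c, c', -, rfl, hc, -⟩ := h
  exact hc

theorem RightExt.exists_supMaxExt (h : RightExt w u) : ∃ y, SupMaxExt w (y ++ u) := by
  classical
  let P : ℕ → Prop := fun n => ∃ r, RightExt w r ∧ u <:+ r ∧ r.length = n
  obtain ⟨r, hr, ⟨y, rfl⟩, hlen⟩ : P (Nat.findGreatest P w.length) :=
    Nat.findGreatest_spec h.infix.length_le ⟨u, h, List.suffix_refl u, rfl⟩
  refine ⟨y, hr, fun v hv hsuf => hsuf.eq_of_length (le_antisymm hsuf.length_le ?_)⟩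
  rw [hlen]
  exact Nat.le_findGreatest hv.infix.length_le
    ⟨v, hv, (List.suffix_append y u).trans hsuf, rfl⟩

theorem exists_eq_append_common_suffix (y z : List α) :
    ∃ a b t, y = a ++ t ∧ z = b ++ t ∧ (a = [] ∨ b = [] ∨ a.getLast? ≠ b.getLast?) := by
  induction y using List.reverseRecOn generalizing z with
  | nil => exact ⟨[], z, [], rfl, by simp, Or.inl rfl⟩
  | append_singleton y c ih =>
    rcases List.eq_nil_or_concat z with rfl | ⟨z, d, rfl⟩
    · exact ⟨y ++ [c], [], [], by simp, rfl, Or.inr (Or.inl rfl)⟩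
    by_cases hcd : c = d
    · obtain ⟨a, b, t, rfl, rfl, hab⟩ := ih z
      exact ⟨a, b, t ++ [c], by simp, by simp [hcd], hab⟩
    · exact ⟨y ++ [c], z ++ [d], [], by simp, by simp, Or.inr (Or.inr (by simpa using hcd))⟩

theorem UniqueTerm.eq_nil_of_suffix (hterm : UniqueTerm w) (hu : u ≠ []) (hsuf : u <:+ w)
    {s t : List α} (hw : w = s ++ u ++ t) : t = [] := by
  obtain ⟨v, d, rfl, hd⟩ := hterm
  obtain ⟨u, e, rfl⟩ : ∃ u₀ e, u = u₀ ++ [e] := by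
    simpa [hu] using List.eq_nil_or_concat u
  obtain rfl : e = d := by
    obtain ⟨p, hp⟩ := hsuf
    simpa using congrArg List.getLast? hp
  rcases List.eq_nil_or_concat t with rfl | ⟨t, f, rfl⟩
  · rfl
  · have hw' : s ++ (u ++ [e]) ++ t ++ [f] = v ++ [e] := by rw [hw]; simp
    exact absurd ((List.append_inj' hw' rfl).1 ▸ by simp) hd

theorem UniqueTerm.exists_occursAt_append_singleton (hterm : UniqueTerm w) (hu : u ≠ [])
    (hi : occursAt w u i) (hi' : occursAt w u i') (hne : i ≠ i') :
    ∃ c, occursAt w (u ++ [c]) i := by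
  obtain ⟨s, t, rfl, rfl⟩ := occursAt_iff.1 hi
  cases t with
  | cons c t => exact ⟨c, occursAt_iff.2 ⟨s, t, by simp, rfl⟩⟩
  | nil =>
    obtain ⟨s', t', hw, rfl⟩ := occursAt_iff.1 hi'
    obtain rfl := hterm.eq_nil_of_suffix hu ⟨s, by simp⟩ hw
    have hlen := congrArg List.length hw
    simp only [List.length_append, List.length_nil] at hlen
    omega

theorem exists_genPair_of_ne {c c' : α} (hcc : c ≠ c') (hu : u ≠ [])
    (hc : u ++ [c] <:+: w) (hc' : u ++ [c'] <:+: w) :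
    ∃ p p', occursAt w (u ++ [c]) p ∧ occursAt w (u ++ [c']) p' ∧
      ∀ k < u.length, GenPair w (p + k) (p' + k) := by
  obtain ⟨y, hy⟩ := RightExt.exists_supMaxExt (w := w) ⟨u, c, c', hcc, rfl, hc, hc'⟩
  obtain ⟨y', hy'⟩ := RightExt.exists_supMaxExt (w := w) ⟨u, c', c, hcc.symm, rfl, hc', hc⟩
  obtain ⟨l, hl⟩ := exists_leftmostOcc hy.1.infix
  obtain ⟨l', hl'⟩ := exists_leftmostOcc hy'.1.infix
  obtain ⟨a, b, t, rfl, rfl, hab⟩ := exists_eq_append_common_suffix y y'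
  have hassoc {a : List α} {d : α} : a ++ (t ++ u) ++ [d] = a ++ t ++ (u ++ [d]) := by simp
  refine ⟨l + (a ++ t).length, l' + (b ++ t).length, hl.1.right_of_append,
    hl'.1.right_of_append, fun k hk => ?_⟩
  refine ⟨a, b, t ++ u, c, c', l, l', by simp [hu], hassoc ▸ hy, hassoc ▸ hy', hab, hassoc ▸ hl, hassoc ▸ hl',
    t.length + k, ?_, ?_, ?_⟩ <;> simp <;> omega

end

theorem chiEquiv_of_occursAt {α : Type*} {w u : List α} {i i' : ℕ} (hterm : UniqueTerm w)
    (hi : occursAt w u i) (hi' : occursAt w u i') {k : ℕ} (hk : k < u.length) :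
    chiEquiv w (i + k) (i' + k) := by
  induction hn : w.length - u.length using Nat.strong_induction_on generalizing u i i' with
  | _ n ih =>
    obtain rfl | hne := eq_or_ne i i'
    · exact Relation.EqvGen.refl _
    have hu : u ≠ [] := List.ne_nil_of_length_pos (by omega)
    have ih_ext {c : α} {j j' : ℕ} (hj : occursAt w (u ++ [c]) j) (hj' : occursAt w (u ++ [c]) j') :
        chiEquiv w (j + k) (j' + k) := by
      have hle := hj.infix.length_le
      simp only [List.length_append, List.length_singleton] at hle
      exact ih _ (by simp only [List.length_append, List.length_singleton]; omega) hj hj'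
        (by simp; omega) rfl
    obtain ⟨c, hc⟩ := hterm.exists_occursAt_append_singleton hu hi hi' hne
    obtain ⟨c', hc'⟩ := hterm.exists_occursAt_append_singleton hu hi' hi hne.symm
    obtain rfl | hcc := eq_or_ne c c'
    · exact ih_ext hc hc'
    obtain ⟨p, p', hp, hp', hgen⟩ := exists_genPair_of_ne hcc hu hc.infix hc'.infix
    exact ((ih_ext hc hp).trans _ _ _ (.rel _ _ (hgen k hk))).trans _ _ _ (ih_ext hc' hp').symm

theorem stmt9_general {α : Type*} (w u : List α) (hterm : UniqueTerm w)
    (i i' : ℕ) (h1 : occursAt w u i) (h2 : occursAt w u i') :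
    ∀ k < u.length, chiEquiv w (i + k) (i' + k) :=
  fun _ hk => chiEquiv_of_occursAt hterm h1 h2 hk

theorem stmt9 {α : Type*} (w u : List α) (hterm : UniqueTerm w) (hu : u ≠ [])
    (hrep : ∃ a b, a ≠ b ∧ occursAt w u a ∧ occursAt w u b)
    (i i' : ℕ) (h1 : occursAt w u i) (h2 : occursAt w u i') :
    ∀ k < u.length, chiEquiv w (i + k) (i' + k) :=
  stmt9_general w u hterm i i' h1 h2
end

section
/- If S ⊆ [1..n] is a suffixient set for w, then |S| ≥ number of super-maximal right extensions ending with distinct final-character/context classes; formally: for every suffixient set S of w and every super-maximal right extension x ∈ SRE(w), there exists j ∈ S with x a suffix of w[1..j], and no single j ∈ S can serve two distinct super-maximal right extensions; hence |S| ≥ |SRE(w)| = χ(w). -/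
/-- `S` is a suffixient set for `w`. -/
def Suffixient {α : Type*} (w : List α) (S : Finset ℕ) : Prop :=
  ∀ u : List α, RightExt w u → ∃ j ∈ S, u <:+ w.take j

theorem Set.ncard_le_card_of_left_unique_witness {β γ : Type*} {s : Set β} {S : Finset γ}
    (R : β → γ → Prop) (hex : ∀ x ∈ s, ∃ j ∈ S, R x j)
    (huniq : ∀ j ∈ S, ∀ x ∈ s, ∀ x' ∈ s, R x j → R x' j → x = x') :
    s.ncard ≤ S.card := by
  choose f hfS hfR using hex
  let g : s → S := fun x => ⟨f x x.2, hfS x x.2⟩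
  have hg : Function.Injective g := fun x x' h => by
    have hf : f x x.2 = f x' x'.2 := congrArg Subtype.val h
    exact Subtype.ext <| huniq _ (hfS x' x'.2) x x.2 x' x'.2 (hf ▸ hfR x x.2) (hfR x' x'.2)
  calc s.ncard = Nat.card s := (Nat.card_coe_set_eq s).symm
    _ ≤ Nat.card S := Nat.card_le_card_of_injective g hg
    _ = S.card := Nat.card_eq_finsetCard S

theorem SupMaxExt.eq_of_suffix_of_suffix {α : Type*} {w x x' t : List α}
    (hx : SupMaxExt w x) (hx' : SupMaxExt w x') (ht : x <:+ t) (ht' : x' <:+ t) : x = x' :=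
  (List.suffix_or_suffix_of_suffix ht ht').elim (hx.2 x' hx'.1) fun h => (hx'.2 x hx.1 h).symm

theorem stmt18_general {α : Type*} (w : List α)
    (S : Finset ℕ) (hS : Suffixient w S) :
    (∀ x ∈ SRE w, ∃ j ∈ S, x <:+ w.take j) ∧
    (∀ j ∈ S, ∀ x ∈ SRE w, ∀ x' ∈ SRE w,
      x <:+ w.take j → x' <:+ w.take j → x = x') ∧
    chi w ≤ S.card := by
  have hcover : ∀ x ∈ SRE w, ∃ j ∈ S, x <:+ w.take j := fun x hx => hS x hx.1
  have hunique : ∀ j ∈ S, ∀ x ∈ SRE w, ∀ x' ∈ SRE w,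
      x <:+ w.take j → x' <:+ w.take j → x = x' :=
    fun _ _ _ hx _ hx' => SupMaxExt.eq_of_suffix_of_suffix hx hx'
  exact ⟨hcover, hunique, Set.ncard_le_card_of_left_unique_witness _ hcover hunique⟩

theorem stmt18 {α : Type*} (w : List α) (hterm : UniqueTerm w)
    (S : Finset ℕ) (hS : Suffixient w S) :
    (∀ x ∈ SRE w, ∃ j ∈ S, x <:+ w.take j) ∧
    (∀ j ∈ S, ∀ x ∈ SRE w, ∀ x' ∈ SRE w,
      x <:+ w.take j → x' <:+ w.take j → x = x') ∧
    chi w ≤ S.card :=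
  stmt18_general w S hS
end
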